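/- arXiv:2503.19154 — 7 statements merged into one kernel-verified Lean document; each statement's English description precedes it below -/
import Mathlib

section
/- Let c : [0,∞) → ℝ be a continuous, positive and non-decreasing function, and let ψ : [0,∞) → ℝ be twice differentiable with ψ''(θ) = c(θ)·ψ(θ) for all θ > 0, ψ(0) = 0 and ψ'(0) = 1. Then for every θ ≥ 0 one has ψ(θ) ≤ θ·exp(∫₀^θ √(c(t)) dt). -/
/-!
`ψ` stays positive: on an interval `(0, t₁)` where `ψ > 0` it is convex, since `ψ'' = c ψ ≥ 0`,
so it cannot come back to `0` at `t₁`. Hence `ψ'` is non-decreasing. Given `θ > 0`, the mean value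
theorem yields `s ∈ (0, θ)` with `ψ'(s) = ψ(θ) / θ`; as `c` is non-decreasing, the energy
`ψ'² - c(θ) ψ²` decreases on `[s, θ]`, which gives `ψ'(θ) ≤ ψ(θ) / θ + √c(θ) ψ(θ)`. Therefore
`log (ψ(θ) / θ) - ∫₀^θ √c` is non-increasing, and it tends to `0` at `0⁺` since `ψ(θ) / θ → ψ'(0)`.
-/

open Real Filter Set MeasureTheory Topology

theorem tendsto_div_nhdsGT_zero_of_hasDerivAt {ψ : ℝ → ℝ} {a : ℝ} (h : HasDerivAt ψ a 0)
    (h0 : ψ 0 = 0) : Tendsto (fun t => ψ t / t) (𝓝[>] 0) (𝓝 a) :=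
  h.tendsto_slope_zero_right.congr fun t => by simp [h0, div_eq_inv_mul]

theorem exists_forall_Ioo_pos_of_hasDerivAt {ψ : ℝ → ℝ} {a : ℝ} (h : HasDerivAt ψ a 0)
    (h0 : ψ 0 = 0) (ha : 0 < a) : ∃ u > 0, ∀ t ∈ Ioo 0 u, 0 < ψ t := by
  have hev := ((tendsto_div_nhdsGT_zero_of_hasDerivAt h h0).eventually
    (eventually_gt_nhds ha)).and self_mem_nhdsWithin
  obtain ⟨u, hu, hsub⟩ := mem_nhdsGT_iff_exists_Ioo_subset.1 hev
  exact ⟨u, hu, fun t ht => (div_pos_iff_of_pos_right (hsub ht).2).1 (hsub ht).1⟩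

theorem pos_of_hasDerivAt_deriv_eq_mul {c ψ ψ' : ℝ → ℝ} (hc : ∀ θ > 0, 0 ≤ c θ)
    (hψ : ∀ θ ≥ 0, HasDerivAt ψ (ψ' θ) θ) (hψ' : ∀ θ > 0, HasDerivAt ψ' (c θ * ψ θ) θ)
    (hψ0 : ψ 0 = 0) (hψ'0 : 0 < ψ' 0) : ∀ θ > 0, 0 < ψ θ := by
  obtain ⟨u, hu0, hu⟩ := exists_forall_Ioo_pos_of_hasDerivAt (hψ 0 le_rfl) hψ0 hψ'0
  by_contra! ⟨θ, hθ, hψθ⟩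
  -- `t₁ = inf S` is the first point of `(0, ∞)` where `ψ ≤ 0`
  set S := Ici (u / 2) ∩ ψ ⁻¹' Iic 0
  have hS : IsClosed S :=
    ContinuousOn.preimage_isClosed_of_isClosed (fun t ht => (hψ t (by
      linarith [mem_Ici.1 ht])).continuousAt.continuousWithinAt) isClosed_Ici isClosed_Iic
  have hSbdd : BddBelow S := ⟨u / 2, fun _ ht => ht.1⟩
  have hθS : θ ∈ S := ⟨show u / 2 ≤ θ by by_contra! h; linarith [hu θ ⟨hθ, by linarith⟩], hψθ⟩
  set t₁ := sInf S
  have ht₁ : t₁ ∈ S := hS.csInf_mem ⟨θ, hθS⟩ hSbdd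
  have ht₁pos : 0 < t₁ := by linarith [ht₁.1.out]
  have hpos : ∀ t ∈ Ioo 0 t₁, 0 < ψ t := by
    intro t ht
    by_contra! h
    rcases lt_or_ge t (u / 2) with htu | htu
    · exact h.not_gt (hu t ⟨ht.1, by linarith⟩)
    · exact (csInf_le hSbdd ⟨htu, h⟩).not_gt ht.2
  have hconv : ConvexOn ℝ (Icc 0 t₁) ψ := by
    refine convexOn_of_hasDerivWithinAt2_nonneg (f' := ψ') (f'' := fun t => c t * ψ t)
      (convex_Icc 0 t₁) (fun t ht => (hψ t ht.1).continuousAt.continuousWithinAt) ?_ ?_ ?_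
      <;> intro t ht <;> rw [interior_Icc] at ht
    · exact (hψ t ht.1.le).hasDerivWithinAt
    · exact (hψ' t ht.1).hasDerivWithinAt
    · exact mul_nonneg (hc t ht.1) (hpos t ht).le
  have hmid := hconv.2 (left_mem_Icc.2 ht₁pos.le) (right_mem_Icc.2 ht₁pos.le)
    (by norm_num : (0:ℝ) ≤ 1 / 2) (by norm_num : (0:ℝ) ≤ 1 / 2) (by norm_num)
  simp only [smul_eq_mul, mul_zero, zero_add, hψ0] at hmid
  have h1 := hpos (1 / 2 * t₁) ⟨by positivity, by linarith⟩
  have h2 : ψ t₁ ≤ 0 := ht₁.2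
  linarith

theorem sq_deriv_sub_mul_sq_le {c ψ ψ' : ℝ → ℝ} {s θ : ℝ} (hsθ : s ≤ θ)
    (hψ : ∀ t ∈ Icc s θ, HasDerivAt ψ (ψ' t) t)
    (hψ' : ∀ t ∈ Icc s θ, HasDerivAt ψ' (c t * ψ t) t)
    (hc : ∀ t ∈ Icc s θ, c t ≤ c θ) (hψψ' : ∀ t ∈ Icc s θ, 0 ≤ ψ t * ψ' t) :
    ψ' θ ^ 2 - c θ * ψ θ ^ 2 ≤ ψ' s ^ 2 - c θ * ψ s ^ 2 := by
  have hE : ∀ t ∈ Icc s θ, HasDerivAt (fun t => ψ' t ^ 2 - c θ * ψ t ^ 2)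
      (2 * (c t - c θ) * (ψ t * ψ' t)) t := by
    intro t ht
    refine (((hψ' t ht).fun_pow 2).fun_sub (((hψ t ht).fun_pow 2).const_mul (c θ))).congr_deriv ?_
    push_cast
    ring
  refine antitoneOn_of_hasDerivWithinAt_nonpos (convex_Icc s θ)
    (fun t ht => (hE t ht).continuousAt.continuousWithinAt)
    (fun t ht => (hE t (interior_subset ht)).hasDerivWithinAt) (fun t ht => ?_)
    (left_mem_Icc.2 hsθ) (right_mem_Icc.2 hsθ) hsθ
  have ht := interior_subset ht
  exact mul_nonpos_of_nonpos_of_nonneg (by linarith [hc t ht]) (hψψ' t ht)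

theorem deriv_le_inv_add_sqrt_mul {c ψ ψ' : ℝ → ℝ} (hc : ∀ θ > 0, 0 ≤ c θ)
    (hc_mono : MonotoneOn c (Ioi 0)) (hψ : ∀ θ ≥ 0, HasDerivAt ψ (ψ' θ) θ)
    (hψ' : ∀ θ > 0, HasDerivAt ψ' (c θ * ψ θ) θ) (hψ0 : ψ 0 = 0) (hpos : ∀ θ > 0, 0 < ψ θ)
    {θ : ℝ} (hθ : 0 < θ) : ψ' θ ≤ (θ⁻¹ + √(c θ)) * ψ θ := by
  have hψ'_mono : MonotoneOn ψ' (Ioi 0) :=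
    monotoneOn_of_hasDerivWithinAt_nonneg (convex_Ioi 0)
      (fun t ht => (hψ' t ht).continuousAt.continuousWithinAt)
      (fun t ht => (hψ' t (interior_subset ht)).hasDerivWithinAt)
      (fun t ht => mul_nonneg (hc t (interior_subset ht)) (hpos t (interior_subset ht)).le)
  obtain ⟨s, ⟨hs, hsθ⟩, hψ's⟩ := exists_hasDerivAt_eq_slope ψ ψ' hθ
    (fun t ht => (hψ t ht.1).continuousAt.continuousWithinAt) (fun t ht => hψ t ht.1.le)
  rw [hψ0, sub_zero, sub_zero] at hψ's
  have hψ's_pos : 0 < ψ' s := hψ's ▸ div_pos (hpos θ hθ) hθ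
  have hsub : Icc s θ ⊆ Ioi 0 := fun t ht => hs.trans_le ht.1
  have henergy := sq_deriv_sub_mul_sq_le hsθ.le (fun t ht => hψ t (hsub ht).le)
    (fun t ht => hψ' t (hsub ht)) (fun t ht => hc_mono (hsub ht) hθ ht.2)
    (fun t ht => mul_nonneg (hpos t (hsub ht)).le
      (hψ's_pos.trans_le (hψ'_mono hs (hsub ht) ht.1)).le)
  -- hence `ψ'(θ)² ≤ ψ'(s)² + c(θ) ψ(θ)² ≤ (ψ'(s) + √c(θ) ψ(θ))²`
  have hsqrt := sq_sqrt (hc θ hθ)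
  have hbound : ψ' θ ≤ ψ' s + √(c θ) * ψ θ := by
    refine le_of_pow_le_pow_left₀ two_ne_zero (by positivity [(hpos θ hθ).le]) ?_
    nlinarith [mul_nonneg hψ's_pos.le (mul_nonneg (sqrt_nonneg (c θ)) (hpos θ hθ).le),
      sq_nonneg (ψ s), hc θ hθ]
  rw [hψ's] at hbound
  linarith [show ψ θ / θ = θ⁻¹ * ψ θ from div_eq_inv_mul _ _]

theorem tendsto_integral_nhdsGT_zero {g : ℝ → ℝ} (hg : ContinuousOn g (Ici 0)) :
    Tendsto (fun x => ∫ t in (0:ℝ)..x, g t) (𝓝[>] 0) (𝓝 0) := by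
  have hint : IntervalIntegrable g volume 0 1 :=
    (hg.mono Icc_subset_Ici_self).intervalIntegrable_of_Icc zero_le_one
  have hcont := intervalIntegral.continuousOn_primitive_interval' hint left_mem_uIcc 0 left_mem_uIcc
  rw [uIcc_of_le zero_le_one] at hcont
  simpa using hcont.tendsto.mono_left (nhdsWithin_le_of_mem (Icc_mem_nhdsGT zero_lt_one))

theorem le_mul_exp_integral_of_deriv_le {ψ ψ' g : ℝ → ℝ} (hg : ContinuousOn g (Ici 0))
    (hψ : ∀ θ ≥ 0, HasDerivAt ψ (ψ' θ) θ) (hψ0 : ψ 0 = 0) (hψ'0 : ψ' 0 = 1)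
    (hpos : ∀ θ > 0, 0 < ψ θ) (hle : ∀ θ > 0, ψ' θ ≤ (θ⁻¹ + g θ) * ψ θ) {θ : ℝ} (hθ : 0 ≤ θ) :
    ψ θ ≤ θ * exp (∫ t in (0:ℝ)..θ, g t) := by
  obtain rfl | hθ := hθ.eq_or_lt
  · simp [hψ0]
  set G := fun x => ∫ t in (0:ℝ)..x, g t
  have hG : ∀ x > 0, HasDerivAt G (g x) x := fun x hx =>
    intervalIntegral.integral_hasDerivAt_right
      ((hg.mono Icc_subset_Ici_self).intervalIntegrable_of_Icc hx.le)
      ((hg.mono fun _ ht => le_of_lt ht).stronglyMeasurableAtFilter isOpen_Ioi x hx)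
      (hg.continuousAt (Ici_mem_nhds hx))
  set F := fun x => log (ψ x) - log x - G x
  have hF : ∀ x > 0, HasDerivAt F (ψ' x / ψ x - x⁻¹ - g x) x := fun x hx =>
    (((hψ x hx.le).log (hpos x hx).ne').sub (hasDerivAt_log hx.ne')).sub (hG x hx)
  have hanti : AntitoneOn F (Ioi 0) :=
    antitoneOn_of_hasDerivWithinAt_nonpos (convex_Ioi 0)
      (fun x hx => (hF x hx).continuousAt.continuousWithinAt)
      (fun x hx => (hF x (interior_subset hx)).hasDerivWithinAt) fun x hx => by
        have hx := interior_subset hx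
        have := (div_le_iff₀ (hpos x hx)).2 (hle x hx)
        linarith
  have hlim : Tendsto F (𝓝[>] 0) (𝓝 0) := by
    have hlog := ((continuousAt_log one_ne_zero).tendsto.comp
      (tendsto_div_nhdsGT_zero_of_hasDerivAt (hψ'0 ▸ hψ 0 le_rfl) hψ0)).sub
      (tendsto_integral_nhdsGT_zero hg)
    rw [log_one, sub_zero] at hlog
    refine hlog.congr' ?_
    filter_upwards [self_mem_nhdsWithin] with x hx
    simp only [Function.comp_apply, F, G, log_div (hpos x hx).ne' (ne_of_gt hx)]
  have hFθ : F θ ≤ 0 := ge_of_tendsto hlim <| by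
    filter_upwards [Ioo_mem_nhdsGT hθ] with x hx
    exact hanti hx.1 hθ hx.2.le
  rw [← log_le_log_iff (hpos θ hθ) (by positivity), log_mul hθ.ne' (exp_pos _).ne', log_exp]
  linarith

/-- Lemma 2.5 (upper bound): if `c` is continuous, positive and non-decreasing on `[0,∞)`
and `ψ` solves `ψ'' = c ψ`, `ψ(0) = 0`, `ψ'(0) = 1`, then
`ψ(θ) ≤ θ · exp(∫₀^θ √(c t) dt)` for all `θ ≥ 0`. -/
theorem stmt0 (c ψ ψ' : ℝ → ℝ)
    (hc_cont : ContinuousOn c (Set.Ici 0))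
    (hc_pos : ∀ θ ≥ (0:ℝ), 0 < c θ)
    (hc_mono : MonotoneOn c (Set.Ici 0))
    (hψ : ∀ θ ≥ (0:ℝ), HasDerivAt ψ (ψ' θ) θ)
    (hψ'' : ∀ θ > (0:ℝ), HasDerivAt ψ' (c θ * ψ θ) θ)
    (hψ0 : ψ 0 = 0) (hψ'0 : ψ' 0 = 1) :
    ∀ θ ≥ (0:ℝ), ψ θ ≤ θ * Real.exp (∫ t in (0:ℝ)..θ, Real.sqrt (c t)) := by
  have hc : ∀ θ > (0:ℝ), 0 ≤ c θ := fun θ hθ => (hc_pos θ hθ.le).le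
  have hpos := pos_of_hasDerivAt_deriv_eq_mul hc hψ hψ'' hψ0 (hψ'0 ▸ one_pos)
  intro θ hθ
  exact le_mul_exp_integral_of_deriv_le (continuous_sqrt.comp_continuousOn hc_cont) hψ hψ0 hψ'0
    hpos (fun θ hθ => deriv_le_inv_add_sqrt_mul hc (hc_mono.mono Ioi_subset_Ici_self) hψ hψ''
      hψ0 hpos hθ) hθ
end

section
/- Let d ≥ 2 be an integer, 0 < q < 1, c > 0, and λ > (d−1)(1−q)/q, and set p = (d−1)(1−q)/(λq) ∈ (0,1). There exists a constant C > 0, depending only on λ, q, c and d, such that for all Borel measurable functions f, g : ℝ^d → [0,∞] with g(x) ≤ (sinh(√c·‖x‖)/(√c·‖x‖))^{d−1} for almost every x ≠ 0, one has ∫_{ℝ^d} f(x)^q g(x) dx ≤ C · (∫_{ℝ^d} f(x) g(x) dx)^{(1−p)q} · (∫_{ℝ^d} (sinh(√c·‖x‖)/√c)^λ f(x) g(x) dx)^{pq}, where all integrals are with respect to Lebesgue measure on ℝ^d and take values in [0,∞]. -/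
open Real Filter Set MeasureTheory
open scoped ENNReal
open Topology Module Metric

/-!
Split `f ^ q * g = (f * u * g) ^ q * (g * u ^ (-s)) ^ (1 - q)` with `u = 1 + ε w`,
`w = (sinh (√c ‖x‖) / √c) ^ λ` and `s = q / (1 - q)`, and apply Hölder with the exponents
`1 / q`, `1 / (1 - q)`. The first factor is `∫ f g + ε ∫ w f g`. In polar coordinates the second
is at most a constant times `ε ^ (-(d - 1) / λ)`: cut the radial integral where `ε w = 1`, bound
`(1 + ε w) ^ (-s)` by `1` inside and by `(ε w) ^ (-s)` outside, and integrate the resulting powers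
of `sinh` using `sinh ≤ cosh`; this is where `λ s > d - 1` is needed. Finally take
`ε = ∫ f g / ∫ w f g`.
-/

theorem ENNReal.rpow_mul_eq_rpow_mul_rpow_of_weight (x y : ℝ≥0∞) {u : ℝ≥0∞} (hu0 : u ≠ 0)
    (hu : u ≠ ⊤) {q : ℝ} (hq0 : 0 < q) (hq1 : q < 1) :
    x ^ q * y = (x * u * y) ^ q * (y * u ^ (-(q / (1 - q)))) ^ (1 - q) := by
  have h1q : 0 < 1 - q := sub_pos.2 hq1
  rw [ENNReal.mul_rpow_of_nonneg _ _ hq0.le, ENNReal.mul_rpow_of_nonneg _ _ hq0.le,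
    ENNReal.mul_rpow_of_nonneg _ _ h1q.le, ← ENNReal.rpow_mul, neg_mul, div_mul_cancel₀ _ h1q.ne']
  calc x ^ q * y = x ^ q * (y ^ q * y ^ (1 - q)) * (u ^ q * u ^ (-q)) := by
        rw [← ENNReal.rpow_add_of_nonneg _ _ hq0.le h1q.le, ← ENNReal.rpow_add _ _ hu0 hu]
        simp
    _ = _ := by ring

theorem ENNReal.lintegral_rpow_mul_le_of_weight {α : Type*} [MeasurableSpace α] {μ : Measure α}
    {f g u : α → ℝ≥0∞} (hf : AEMeasurable f μ) (hg : AEMeasurable g μ) (hu : AEMeasurable u μ)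
    (hu0 : ∀ x, u x ≠ 0) (hut : ∀ x, u x ≠ ⊤) {q : ℝ} (hq0 : 0 < q) (hq1 : q < 1) :
    ∫⁻ x, f x ^ q * g x ∂μ ≤
      (∫⁻ x, f x * u x * g x ∂μ) ^ q * (∫⁻ x, g x * u x ^ (-(q / (1 - q))) ∂μ) ^ (1 - q) := by
  simp_rw [fun x => ENNReal.rpow_mul_eq_rpow_mul_rpow_of_weight (f x) (g x) (hu0 x) (hut x) hq0 hq1]
  exact ENNReal.lintegral_mul_norm_pow_le ((hf.mul hu).mul hg) (hg.mul (hu.pow_const _)) hq0.le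
    (sub_pos.2 hq1).le (add_sub_cancel _ _)

section CarlsonLevin

variable {α : Type*} [MeasurableSpace α] {μ : Measure α} {f g w : α → ℝ≥0∞} {q : ℝ}

theorem lintegral_rpow_mul_le_of_one_add_weight (hf : Measurable f) (hg : Measurable g)
    (hw : Measurable w) (hwt : ∀ x, w x ≠ ⊤) (hq0 : 0 < q) (hq1 : q < 1) (ε : ℝ≥0∞) (hε : ε ≠ ⊤) :
    ∫⁻ x, f x ^ q * g x ∂μ ≤
      (∫⁻ x, f x * g x ∂μ + ε * ∫⁻ x, w x * f x * g x ∂μ) ^ q *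
        (∫⁻ x, g x * (1 + ε * w x) ^ (-(q / (1 - q))) ∂μ) ^ (1 - q) := by
  have hsplit : ∫⁻ x, f x * (1 + ε * w x) * g x ∂μ =
      ∫⁻ x, f x * g x ∂μ + ε * ∫⁻ x, w x * f x * g x ∂μ := by
    rw [← lintegral_const_mul (f := fun x => w x * f x * g x) _ ((hw.mul hf).mul hg),
      ← lintegral_add_left (f := fun x => f x * g x) (hf.mul hg)]
    congr with x
    ring
  rw [← hsplit]
  exact ENNReal.lintegral_rpow_mul_le_of_weight hf.aemeasurable hg.aemeasurable
    (measurable_const.add (measurable_const.mul hw)).aemeasurable (fun x => by simp)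
    (fun x => ENNReal.add_ne_top.2 ⟨ENNReal.one_ne_top, ENNReal.mul_ne_top hε (hwt x)⟩) hq0 hq1

theorem lintegral_rpow_mul_eq_zero (hf : Measurable f) (hg : Measurable g) (hq0 : 0 < q)
    (h : ∫⁻ x, f x * g x ∂μ = 0) : ∫⁻ x, f x ^ q * g x ∂μ = 0 := by
  rw [lintegral_eq_zero_iff (f := fun x => f x * g x) (hf.mul hg)] at h
  rw [lintegral_eq_zero_iff (f := fun x => f x ^ q * g x) ((hf.pow_const q).mul hg)]
  filter_upwards [h] with x hx
  simpa [ENNReal.rpow_eq_zero_iff, hq0, not_lt_of_gt hq0] using hx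

theorem two_mul_rpow_mul_mul_div_rpow_neg_rpow {q p γ M a b : ℝ} (ha : 0 < a) (hb : 0 < b)
    (hM : 0 ≤ M) (hγ : γ * (1 - q) = p * q) :
    (2 * a) ^ q * (M * (a / b) ^ (-γ)) ^ (1 - q) =
      2 ^ q * M ^ (1 - q) * a ^ ((1 - p) * q) * b ^ (p * q) := by
  rw [mul_rpow zero_le_two ha.le, mul_rpow hM (by positivity), rpow_neg (by positivity),
    ← inv_rpow (by positivity), inv_div, ← rpow_mul (by positivity), hγ, div_rpow hb.le ha.le,
    sub_mul, one_mul, rpow_sub ha]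
  field_simp

theorem lintegral_mul_eq_zero_of_lintegral_weight_mul_eq_zero (hf : Measurable f)
    (hg : Measurable g) (hw : Measurable w) (hw0 : ∀ᵐ x ∂μ, w x ≠ 0)
    (h : ∫⁻ x, w x * f x * g x ∂μ = 0) : ∫⁻ x, f x * g x ∂μ = 0 := by
  rw [lintegral_eq_zero_iff (f := fun x => w x * f x * g x) ((hw.mul hf).mul hg)] at h
  rw [lintegral_eq_zero_iff (f := fun x => f x * g x) (hf.mul hg)]
  filter_upwards [h, hw0] with x hx hwx
  simpa [mul_assoc, hwx] using hx

theorem lintegral_rpow_mul_le_of_lintegral_one_add_weight_le (hf : Measurable f)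
    (hg : Measurable g) (hw : Measurable w) (hw0 : ∀ᵐ x ∂μ, w x ≠ 0) (hwt : ∀ x, w x ≠ ⊤)
    {p γ M : ℝ} (hq0 : 0 < q) (hq1 : q < 1) (hp0 : 0 < p) (hp1 : p < 1)
    (hγ : γ * (1 - q) = p * q) (hM : 0 < M)
    (hbound : ∀ ε : ℝ, 0 < ε → ∫⁻ x, g x * (1 + ENNReal.ofReal ε * w x) ^ (-(q / (1 - q))) ∂μ ≤
      ENNReal.ofReal (M * ε ^ (-γ))) :
    ∫⁻ x, f x ^ q * g x ∂μ ≤ ENNReal.ofReal (2 ^ q * M ^ (1 - q)) *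
      (∫⁻ x, f x * g x ∂μ) ^ ((1 - p) * q) * (∫⁻ x, w x * f x * g x ∂μ) ^ (p * q) := by
  set I₁ := ∫⁻ x, f x * g x ∂μ
  set I₂ := ∫⁻ x, w x * f x * g x ∂μ
  have h1q : 0 < 1 - q := sub_pos.2 hq1
  have hpq : 0 < p * q := mul_pos hp0 hq0
  have h1pq : 0 < (1 - p) * q := mul_pos (sub_pos.2 hp1) hq0
  have hC : ENNReal.ofReal (2 ^ q * M ^ (1 - q)) ≠ 0 := by
    rw [Ne, ENNReal.ofReal_eq_zero, not_le]; positivity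
  rcases eq_or_ne I₁ 0 with h₁ | h₁
  · simp [lintegral_rpow_mul_eq_zero hf hg hq0 h₁]
  have h₂ : I₂ ≠ 0 := mt (lintegral_mul_eq_zero_of_lintegral_weight_mul_eq_zero hf hg hw hw0) h₁
  rcases eq_or_ne I₁ ⊤ with h₁t | h₁t
  · rw [h₁t, ENNReal.top_rpow_of_pos h1pq, ENNReal.mul_top hC,
      ENNReal.top_mul (ENNReal.rpow_pos_of_nonneg (pos_iff_ne_zero.2 h₂) hpq.le).ne']
    exact le_top
  rcases eq_or_ne I₂ ⊤ with h₂t | h₂t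
  · rw [h₂t, ENNReal.top_rpow_of_pos hpq, ENNReal.mul_top]
    · exact le_top
    exact mul_ne_zero hC (ENNReal.rpow_pos (pos_iff_ne_zero.2 h₁) h₁t).ne'
  obtain ⟨a, ha, e₁⟩ : ∃ a : ℝ, 0 < a ∧ I₁ = ENNReal.ofReal a :=
    ⟨I₁.toReal, ENNReal.toReal_pos h₁ h₁t, (ENNReal.ofReal_toReal h₁t).symm⟩
  obtain ⟨b, hb, e₂⟩ : ∃ b : ℝ, 0 < b ∧ I₂ = ENNReal.ofReal b :=
    ⟨I₂.toReal, ENNReal.toReal_pos h₂ h₂t, (ENNReal.ofReal_toReal h₂t).symm⟩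
  calc ∫⁻ x, f x ^ q * g x ∂μ
      ≤ (I₁ + ENNReal.ofReal (a / b) * I₂) ^ q * ENNReal.ofReal (M * (a / b) ^ (-γ)) ^ (1 - q) :=
        (lintegral_rpow_mul_le_of_one_add_weight hf hg hw hwt hq0 hq1 _ ENNReal.ofReal_ne_top).trans
          (by gcongr; exact hbound _ (div_pos ha hb))
    _ = ENNReal.ofReal ((2 * a) ^ q * (M * (a / b) ^ (-γ)) ^ (1 - q)) := by
        rw [e₁, e₂, ← ENNReal.ofReal_mul (div_pos ha hb).le, div_mul_cancel₀ _ hb.ne',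
          ← ENNReal.ofReal_add ha.le ha.le, ← two_mul, ENNReal.ofReal_rpow_of_nonneg (by positivity)
          hq0.le, ENNReal.ofReal_rpow_of_nonneg (by positivity) h1q.le,
          ← ENNReal.ofReal_mul (by positivity)]
    _ = _ := by
        rw [two_mul_rpow_mul_mul_div_rpow_neg_rpow ha hb hM.le hγ, e₁, e₂,
          ENNReal.ofReal_mul (by positivity), ENNReal.ofReal_mul (by positivity),
          ENNReal.ofReal_rpow_of_nonneg ha.le h1pq.le,
          ENNReal.ofReal_rpow_of_nonneg hb.le hpq.le]

end CarlsonLevin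

theorem lintegral_Ioc_ofReal_deriv_eq_sub {f f' : ℝ → ℝ} {a b : ℝ} (hab : a ≤ b)
    (hf : ∀ x ∈ uIcc a b, HasDerivAt f (f' x) x) (hf' : IntervalIntegrable f' volume a b)
    (hf'0 : ∀ x ∈ Ioc a b, 0 ≤ f' x) :
    ∫⁻ x in Ioc a b, ENNReal.ofReal (f' x) = ENNReal.ofReal (f b - f a) := by
  rw [← intervalIntegral.integral_eq_sub_of_hasDerivAt hf hf', intervalIntegral.integral_of_le hab,
    ofReal_integral_eq_lintegral_ofReal ((intervalIntegrable_iff_integrableOn_Ioc_of_le hab).1 hf')]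
  exact (ae_restrict_iff' measurableSet_Ioc).2 (.of_forall hf'0)

theorem lintegral_Ioi_ofReal_deriv_eq_sub {f f' : ℝ → ℝ} {a l : ℝ}
    (hf : ∀ x ∈ Ici a, HasDerivAt f (f' x) x) (hf'0 : ∀ x ∈ Ioi a, 0 ≤ f' x)
    (hfl : Tendsto f atTop (𝓝 l)) :
    ∫⁻ x in Ioi a, ENNReal.ofReal (f' x) = ENNReal.ofReal (l - f a) := by
  rw [← integral_Ioi_of_hasDerivAt_of_nonneg' hf hf'0 hfl,
    ofReal_integral_eq_lintegral_ofReal (integrableOn_Ioi_deriv_of_nonneg' hf hf'0 hfl)]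
  exact (ae_restrict_iff' measurableSet_Ioi).2 (.of_forall hf'0)

theorem hasDerivAt_sinh_mul_div {a : ℝ} (ha : a ≠ 0) (r : ℝ) :
    HasDerivAt (fun r => sinh (a * r) / a) (cosh (a * r)) r := by
  simpa [mul_div_cancel_right₀ _ ha] using (((hasDerivAt_id r).const_mul a).sinh).div_const a

theorem lintegral_Ioc_sinh_div_pow_le {n : ℕ} (hn : n ≠ 0) {a : ℝ} (ha : 0 < a) {R : ℝ}
    (hR : 0 ≤ R) :
    ∫⁻ r in Ioc 0 R, ENNReal.ofReal ((sinh (a * r) / a) ^ n) ≤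
      ENNReal.ofReal ((sinh (a * R) / a) ^ n / (a * n)) := by
  set F' : ℝ → ℝ := fun r => n * (sinh (a * r) / a) ^ (n - 1) * cosh (a * r) / (a * n)
  have hF : ∀ r, HasDerivAt (fun r => (sinh (a * r) / a) ^ n / (a * n)) (F' r) r := fun r =>
    ((hasDerivAt_sinh_mul_div ha.ne' r).pow n).div_const _
  have hT : ∀ r, 0 ≤ r → 0 ≤ sinh (a * r) / a := fun r hr =>
    div_nonneg (sinh_nonneg_iff.2 (mul_nonneg ha.le hr)) ha.le
  have hle : ∀ r ∈ Ioc 0 R, (sinh (a * r) / a) ^ n ≤ F' r := by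
    intro r hr
    calc (sinh (a * r) / a) ^ n = (sinh (a * r) / a) ^ (n - 1) * (sinh (a * r) / a) := by
          rw [← pow_succ, Nat.sub_add_cancel (Nat.one_le_iff_ne_zero.2 hn)]
      _ ≤ (sinh (a * r) / a) ^ (n - 1) * (cosh (a * r) / a) :=
          mul_le_mul_of_nonneg_left (div_le_div_of_nonneg_right (sinh_lt_cosh _).le ha.le)
            (pow_nonneg (hT r hr.1.le) _)
      _ = F' r := by simp only [F']; field_simp
  calc ∫⁻ r in Ioc 0 R, ENNReal.ofReal ((sinh (a * r) / a) ^ n)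
      ≤ ∫⁻ r in Ioc 0 R, ENNReal.ofReal (F' r) :=
        setLIntegral_mono' measurableSet_Ioc fun r hr => ENNReal.ofReal_le_ofReal (hle r hr)
    _ = _ := by
        rw [lintegral_Ioc_ofReal_deriv_eq_sub hR (fun r _ => hF r)
          (Continuous.intervalIntegrable (by fun_prop) _ _)
          (fun r hr => (pow_nonneg (hT r hr.1.le) _).trans (hle r hr))]
        simp [zero_pow hn]

theorem lintegral_Ioi_sinh_div_rpow_neg_le {a β R : ℝ} (ha : 0 < a) (hβ : 0 < β) (hR : 0 < R) :
    ∫⁻ r in Ioi R, ENNReal.ofReal ((sinh (a * r) / a) ^ (-β)) ≤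
      ENNReal.ofReal ((sinh (a * R) / a) ^ (-β) / (a * β)) := by
  have hT : ∀ r, 0 < r → 0 < sinh (a * r) / a := fun r hr =>
    div_pos (sinh_pos_iff.2 (mul_pos ha hr)) ha
  set F' : ℝ → ℝ := fun r => (sinh (a * r) / a) ^ (-β - 1) * cosh (a * r) / a
  have hF : ∀ r ∈ Ici R, HasDerivAt (fun r => -(sinh (a * r) / a) ^ (-β) / (a * β)) (F' r) r := by
    intro r hr
    refine ((((hasDerivAt_sinh_mul_div ha.ne' r).rpow_const (p := -β)
      (Or.inl (hT r (hR.trans_le hr)).ne')).fun_neg).div_const (a * β)).congr_deriv ?_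
    simp only [F']
    field_simp
  have hle : ∀ r ∈ Ioi R, (sinh (a * r) / a) ^ (-β) ≤ F' r := by
    intro r hr
    have hTr := hT r (hR.trans hr)
    calc (sinh (a * r) / a) ^ (-β) = (sinh (a * r) / a) ^ (-β - 1) * (sinh (a * r) / a) := by
          rw [← rpow_add_one hTr.ne']; ring_nf
      _ ≤ (sinh (a * r) / a) ^ (-β - 1) * (cosh (a * r) / a) := by
          gcongr; exact (sinh_lt_cosh _).le
      _ = F' r := mul_div_assoc' _ _ _
  have hTtop : Tendsto (fun r => sinh (a * r) / a) atTop atTop := by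
    refine tendsto_atTop_mono' atTop ?_ tendsto_id
    filter_upwards [eventually_ge_atTop 0] with r hr
    rw [le_div_iff₀ ha, mul_comm]
    exact self_le_sinh_iff.2 (by positivity)
  have hlim : Tendsto (fun r => -(sinh (a * r) / a) ^ (-β) / (a * β)) atTop (𝓝 0) := by
    simpa using (((tendsto_rpow_neg_atTop hβ).comp hTtop).neg).div_const (a * β)
  calc ∫⁻ r in Ioi R, ENNReal.ofReal ((sinh (a * r) / a) ^ (-β))
      ≤ ∫⁻ r in Ioi R, ENNReal.ofReal (F' r) :=
        setLIntegral_mono' measurableSet_Ioi fun r hr => ENNReal.ofReal_le_ofReal (hle r hr)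
    _ = _ := by
        rw [lintegral_Ioi_ofReal_deriv_eq_sub hF
          (fun r hr => (rpow_nonneg (hT r (hR.trans hr)).le _).trans (hle r hr)) hlim]
        ring_nf

theorem lintegral_Ioi_sinh_div_pow_mul_one_add_rpow_neg_le {n : ℕ} (hn : n ≠ 0)
    {a s lam ε : ℝ} (ha : 0 < a) (hs : 0 < s) (hns : (n : ℝ) < lam * s) (hε : 0 < ε) :
    ∫⁻ r in Ioi 0, ENNReal.ofReal
        ((sinh (a * r) / a) ^ n * (1 + ε * (sinh (a * r) / a) ^ lam) ^ (-s)) ≤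
      ENNReal.ofReal ((1 / (a * n) + 1 / (a * (lam * s - n))) * ε ^ (-(n / lam))) := by
  have hn0 : (0 : ℝ) < n := by positivity
  have hlam : 0 < lam := pos_of_mul_pos_left (hn0.trans hns) hs.le
  have hβ : 0 < lam * s - n := sub_pos.2 hns
  have hT : ∀ r, 0 < r → 0 < sinh (a * r) / a := fun r hr =>
    div_pos (sinh_pos_iff.2 (mul_pos ha hr)) ha
  -- split at the radius `R` where `ε * (sinh (a * R) / a) ^ lam = 1`
  set R := arsinh (a * ε ^ (-lam⁻¹)) / a
  have hR : 0 < R := div_pos (arsinh_pos_iff.2 (by positivity)) ha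
  have hTR : sinh (a * R) / a = ε ^ (-lam⁻¹) := by
    rw [mul_div_cancel₀ _ ha.ne', sinh_arsinh, mul_div_cancel_left₀ _ ha.ne']
  have hnear : ∫⁻ r in Ioc 0 R, ENNReal.ofReal
      ((sinh (a * r) / a) ^ n * (1 + ε * (sinh (a * r) / a) ^ lam) ^ (-s)) ≤
      ENNReal.ofReal (ε ^ (-(n / lam)) / (a * n)) := by
    refine (setLIntegral_mono' measurableSet_Ioc fun r hr => ENNReal.ofReal_le_ofReal ?_).trans
      ((lintegral_Ioc_sinh_div_pow_le hn ha hR.le).trans_eq ?_)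
    · have hTr := (hT r hr.1).le
      exact mul_le_of_le_one_right (pow_nonneg hTr n) (rpow_le_one_of_one_le_of_nonpos
        (le_add_of_nonneg_right (by positivity)) (neg_nonpos.2 hs.le))
    · rw [hTR, ← rpow_natCast, ← rpow_mul hε.le, neg_mul, inv_mul_eq_div]
  have hfar : ∫⁻ r in Ioi R, ENNReal.ofReal
      ((sinh (a * r) / a) ^ n * (1 + ε * (sinh (a * r) / a) ^ lam) ^ (-s)) ≤
      ENNReal.ofReal (ε ^ (-(n / lam)) / (a * (lam * s - n))) := by
    have hle : ∀ r ∈ Ioi R, (sinh (a * r) / a) ^ n * (1 + ε * (sinh (a * r) / a) ^ lam) ^ (-s) ≤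
        ε ^ (-s) * (sinh (a * r) / a) ^ (-(lam * s - n)) := by
      intro r hr
      have hTr := hT r (hR.trans hr)
      calc (sinh (a * r) / a) ^ n * (1 + ε * (sinh (a * r) / a) ^ lam) ^ (-s)
          ≤ (sinh (a * r) / a) ^ n * (ε * (sinh (a * r) / a) ^ lam) ^ (-s) :=
            mul_le_mul_of_nonneg_left (rpow_le_rpow_of_nonpos (by positivity)
              (le_add_of_nonneg_left zero_le_one) (neg_nonpos.2 hs.le)) (pow_nonneg hTr.le n)
        _ = ε ^ (-s) * (sinh (a * r) / a) ^ (-(lam * s - n)) := by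
            rw [mul_rpow hε.le (rpow_nonneg hTr.le _), ← rpow_mul hTr.le, ← rpow_natCast,
              mul_left_comm, ← rpow_add hTr]
            ring_nf
    calc _ ≤ ∫⁻ r in Ioi R, ENNReal.ofReal (ε ^ (-s)) *
          ENNReal.ofReal ((sinh (a * r) / a) ^ (-(lam * s - n))) :=
          setLIntegral_mono' measurableSet_Ioi fun r hr => by
            rw [← ENNReal.ofReal_mul (by positivity)]
            exact ENNReal.ofReal_le_ofReal (hle r hr)
      _ ≤ ENNReal.ofReal (ε ^ (-s)) *
          ENNReal.ofReal ((sinh (a * R) / a) ^ (-(lam * s - n)) / (a * (lam * s - n))) := by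
          rw [lintegral_const_mul' _ _ ENNReal.ofReal_ne_top]
          exact mul_le_mul_right (lintegral_Ioi_sinh_div_rpow_neg_le ha hβ hR) _
      _ = _ := by
          rw [← ENNReal.ofReal_mul (by positivity), hTR, ← rpow_mul hε.le, mul_div_assoc',
            ← rpow_add hε]
          congr 3
          field_simp
          ring
  rw [← Ioc_union_Ioi_eq_Ioi hR.le, lintegral_union measurableSet_Ioi (Ioc_disjoint_Ioi le_rfl)]
  refine (add_le_add hnear hfar).trans_eq ?_
  rw [← ENNReal.ofReal_add (by positivity) (by positivity)]
  congr 1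
  ring

theorem lintegral_fun_norm_addHaar {E : Type*} [NormedAddCommGroup E] [NormedSpace ℝ E]
    [MeasurableSpace E] [BorelSpace E] [FiniteDimensional ℝ E] [Nontrivial E]
    (μ : Measure E) [μ.IsAddHaarMeasure] {F : ℝ → ℝ≥0∞} (hF : Measurable F) :
    ∫⁻ x, F ‖x‖ ∂μ =
      finrank ℝ E * μ (ball 0 1) * ∫⁻ r in Ioi 0, ENNReal.ofReal (r ^ (finrank ℝ E - 1)) * F r :=
  calc ∫⁻ x, F ‖x‖ ∂μ = ∫⁻ x : ({0}ᶜ : Set E), F ‖x.1‖ ∂(μ.comap (↑)) := by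
        rw [lintegral_subtype_comap (measurableSet_singleton _).compl (fun x => F ‖x‖),
          restrict_compl_singleton]
    _ = ∫⁻ x, F x.2 ∂μ.toSphere.prod (.volumeIoiPow (finrank ℝ E - 1)) := by
        simpa using μ.measurePreserving_homeomorphUnitSphereProd.lintegral_comp_emb
          (Homeomorph.measurableEmbedding _) (F ∘ Subtype.val ∘ Prod.snd)
    _ = μ.toSphere univ * ∫⁻ r, F r ∂.volumeIoiPow (finrank ℝ E - 1) := by
        rw [lintegral_prod (fun x : sphere (0 : E) 1 × Ioi (0 : ℝ) => F x.2)
          (hF.comp (measurable_subtype_coe.comp measurable_snd)).aemeasurable]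
        simp [mul_comm]
    _ = _ := by
        rw [μ.toSphere_apply_univ, Measure.volumeIoiPow,
          lintegral_withDensity_eq_lintegral_mul _
            (measurable_subtype_coe.pow_const _).ennreal_ofReal (g := fun r : Ioi (0 : ℝ) => F r)
            (hF.comp measurable_subtype_coe)]
        exact congrArg _ (lintegral_subtype_comap measurableSet_Ioi
          (fun r => ENNReal.ofReal (r ^ (finrank ℝ E - 1)) * F r))

theorem lintegral_mul_one_add_sinh_div_rpow_neg_le {E : Type*} [NormedAddCommGroup E]
    [NormedSpace ℝ E] [MeasurableSpace E] [BorelSpace E] [FiniteDimensional ℝ E]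
    (μ : Measure E) [μ.IsAddHaarMeasure] {n : ℕ} (hE : finrank ℝ E = n + 1) (hn : n ≠ 0)
    {a s lam ε : ℝ} (ha : 0 < a) (hs : 0 < s) (hns : (n : ℝ) < lam * s) (hε : 0 < ε)
    {g : E → ℝ≥0∞}
    (hg : ∀ᵐ x ∂μ, x ≠ 0 → g x ≤ ENNReal.ofReal ((sinh (a * ‖x‖) / (a * ‖x‖)) ^ n)) :
    ∫⁻ x, g x * (1 + ENNReal.ofReal ε * ENNReal.ofReal ((sinh (a * ‖x‖) / a) ^ lam)) ^ (-s) ∂μ ≤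
      ENNReal.ofReal ((n + 1) * μ.real (ball 0 1) * (1 / (a * n) + 1 / (a * (lam * s - n))) *
        ε ^ (-(n / lam))) := by
  have : Nontrivial E := nontrivial_of_finrank_eq_succ hE
  set Φ : ℝ → ℝ := fun r =>
    (sinh (a * r) / (a * r)) ^ n * (1 + ε * (sinh (a * r) / a) ^ lam) ^ (-s)
  have hΦ : Measurable fun r => ENNReal.ofReal (Φ r) := by
    simp only [Φ]; fun_prop
  have hle : ∀ᵐ x ∂μ,
      g x * (1 + ENNReal.ofReal ε * ENNReal.ofReal ((sinh (a * ‖x‖) / a) ^ lam)) ^ (-s) ≤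
        ENNReal.ofReal (Φ ‖x‖) := by
    filter_upwards [hg, μ.ae_ne 0] with x hgx hx
    have hA : 0 ≤ sinh (a * ‖x‖) / (a * ‖x‖) :=
      div_nonneg (sinh_nonneg_iff.2 (by positivity)) (by positivity)
    rw [← ENNReal.ofReal_mul hε.le, ← ENNReal.ofReal_one,
      ← ENNReal.ofReal_add zero_le_one (by positivity), ENNReal.ofReal_rpow_of_pos (by positivity),
      ENNReal.ofReal_mul (pow_nonneg hA n)]
    gcongr
    exact hgx hx
  have hradial : ∀ r ∈ Ioi (0 : ℝ), ENNReal.ofReal (r ^ n) * ENNReal.ofReal (Φ r) =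
      ENNReal.ofReal ((sinh (a * r) / a) ^ n * (1 + ε * (sinh (a * r) / a) ^ lam) ^ (-s)) := by
    intro r (hr : 0 < r)
    rw [← ENNReal.ofReal_mul (pow_nonneg hr.le _), ← mul_assoc, ← mul_pow]
    congr 3
    field_simp
  calc _ ≤ ∫⁻ x, ENNReal.ofReal (Φ ‖x‖) ∂μ := lintegral_mono_ae hle
    _ = (n + 1) * μ (ball 0 1) * ∫⁻ r in Ioi 0,
          ENNReal.ofReal ((sinh (a * r) / a) ^ n * (1 + ε * (sinh (a * r) / a) ^ lam) ^ (-s)) := by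
        rw [lintegral_fun_norm_addHaar μ hΦ, hE, Nat.add_sub_cancel,
          setLIntegral_congr_fun measurableSet_Ioi hradial]
        norm_cast
    _ ≤ (n + 1) * μ (ball 0 1) *
          ENNReal.ofReal ((1 / (a * n) + 1 / (a * (lam * s - n))) * ε ^ (-(n / lam))) := by
        gcongr
        exact lintegral_Ioi_sinh_div_pow_mul_one_add_rpow_neg_le hn ha hs hns hε
    _ = _ := by
        rw [ENNReal.ofReal_mul (by positivity), ENNReal.ofReal_mul (by positivity),
          ENNReal.ofReal_mul (by positivity), ENNReal.ofReal_mul (by positivity),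
          ofReal_measureReal measure_ball_lt_top.ne]
        norm_cast
        ring

/-- Lemma 4.2 (generalized Carlson–Levin inequality, constant curvature bound), in geodesic
normal coordinates: `g` is the normalized Jacobian of the exponential map, bounded by the
hyperbolic one, and `f` plays the role of the density `ρ`. -/
theorem stmt4 (d : ℕ) (hd : 2 ≤ d) (q c lam : ℝ)
    (hq0 : 0 < q) (hq1 : q < 1) (hc : 0 < c)
    (hlam : ((d:ℝ) - 1) * (1 - q) / q < lam)
    (p : ℝ) (hp : p = ((d:ℝ) - 1) * (1 - q) / (lam * q)) :
    ∃ C : ℝ, 0 < C ∧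
      ∀ f g : EuclideanSpace ℝ (Fin d) → ℝ≥0∞, Measurable f → Measurable g →
      (∀ᵐ x : EuclideanSpace ℝ (Fin d), x ≠ 0 →
        g x ≤ ENNReal.ofReal
          ((Real.sinh (Real.sqrt c * ‖x‖) / (Real.sqrt c * ‖x‖)) ^ (d - 1))) →
      ∫⁻ x, f x ^ q * g x ≤
        ENNReal.ofReal C * (∫⁻ x, f x * g x) ^ ((1 - p) * q) *
          (∫⁻ x, ENNReal.ofReal ((Real.sinh (Real.sqrt c * ‖x‖) / Real.sqrt c) ^ lam)
            * f x * g x) ^ (p * q) := by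
  set n := d - 1
  have hn : (n : ℝ) = d - 1 := by rw [Nat.cast_sub (by omega), Nat.cast_one]
  have hn0 : (0 : ℝ) < n := by rw [hn]; linarith [show (2 : ℝ) ≤ d by exact_mod_cast hd]
  have h1q : 0 < 1 - q := sub_pos.2 hq1
  have hnq : (n : ℝ) * (1 - q) < lam * q := by rw [hn]; linarith [(div_lt_iff₀ hq0).1 hlam]
  have hlam0 : 0 < lam := pos_of_mul_pos_left ((mul_pos hn0 h1q).trans hnq) hq0.le
  have hns : (n : ℝ) < lam * (q / (1 - q)) := by rwa [mul_div_assoc', lt_div_iff₀ h1q]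
  have hball : 0 < (volume : Measure (EuclideanSpace ℝ (Fin d))).real (ball 0 1) :=
    ENNReal.toReal_pos (measure_ball_pos _ _ one_pos).ne' measure_ball_lt_top.ne
  set M := (n + 1) * (volume : Measure (EuclideanSpace ℝ (Fin d))).real (ball 0 1) *
    (1 / (√c * n) + 1 / (√c * (lam * (q / (1 - q)) - n)))
  have hM : 0 < M := by have := sub_pos.2 hns; positivity
  refine ⟨2 ^ q * M ^ (1 - q), by positivity, fun f g hf hg hgle => ?_⟩
  refine lintegral_rpow_mul_le_of_lintegral_one_add_weight_le hf hg (by fun_prop) ?_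
    (fun _ => ENNReal.ofReal_ne_top) hq0 hq1 (p := p) (γ := n / lam) ?_ ?_ ?_ hM
    (fun ε hε => lintegral_mul_one_add_sinh_div_rpow_neg_le volume
      (by simp [n]; omega) (by omega) (sqrt_pos.2 hc) (div_pos hq0 h1q) hns hε hgle)
  · have : Nonempty (Fin d) := ⟨⟨0, by omega⟩⟩
    filter_upwards [(volume : Measure (EuclideanSpace ℝ (Fin d))).ae_ne 0] with x hx
    have := sinh_pos_iff.2 (mul_pos (sqrt_pos.2 hc) (norm_pos_iff.2 hx))
    exact (ENNReal.ofReal_pos.2 (rpow_pos_of_pos (div_pos this (sqrt_pos.2 hc)) _)).ne'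
  · rw [hp, ← hn]; positivity
  · rw [hp, div_lt_one (by positivity), ← hn]; exact hnq
  · rw [hp, ← hn]; field_simp
end

section
/- Let d ≥ 1 be an integer, let ν be a Borel probability measure on ℝ^d with ∫ ‖u‖ dν(u) < ∞ and ∫ u dν(u) = 0 (Bochner integral), let D : ℝ^d × ℝ^d → [0,∞) be a Borel measurable function with D(u,v) ≥ ‖u−v‖ for all u, v ∈ ℝ^d, and let H : [0,∞) → [0,∞) be a non-decreasing convex function. Then ∬_{ℝ^d×ℝ^d} H(D(u,v)) dν(u) dν(v) ≥ ∫_{ℝ^d} H(‖u‖) dν(u), where the integrals take values in [0,∞]. -/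
open Real Filter Set MeasureTheory
open scoped ENNReal Topology

/-!
For fixed `u`, the vanishing mean gives `‖u‖ = ‖∫ (u - v) dν(v)‖ ≤ ∫ ‖u - v‖ dν(v)`. Since `H` is
non-decreasing, Jensen's inequality for the convex function `H` then yields
`H ‖u‖ ≤ ∫ H ‖u - v‖ dν(v) ≤ ∫ H (D u v) dν(v)`, and it remains to integrate in `u`.
-/

/-- Continuity at the endpoint `a` comes from squeezing `f` between `f a` and the chord
from `a` to `a + 1`. -/
theorem MonotoneOn.continuousOn_of_convexOn_Ici {f : ℝ → ℝ} {a : ℝ}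
    (hmono : MonotoneOn f (Ici a)) (hconv : ConvexOn ℝ (Ici a) f) :
    ContinuousOn f (Ici a) := by
  intro x hx
  rcases (show a ≤ x from hx).eq_or_lt with rfl | hax
  · have hchord : ∀ y ∈ Icc a (a + 1), f y ≤ f a + (y - a) * (f (a + 1) - f a) := by
      rintro y ⟨hay, hya⟩
      have := hconv.2 (self_mem_Ici : a ∈ Ici a) (show a ≤ a + 1 by linarith)
        (show 0 ≤ 1 - (y - a) by linarith) (show 0 ≤ y - a by linarith) (by ring)
      simp only [smul_eq_mul] at this
      rw [show (1 - (y - a)) * a + (y - a) * (a + 1) = y by ring] at this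
      linarith
    have hlim : Tendsto (fun y => f a + (y - a) * (f (a + 1) - f a)) (𝓝[Ici a] a) (𝓝 (f a)) :=
      ((Continuous.tendsto' (by fun_prop) a _ (by simp))).mono_left nhdsWithin_le_nhds
    have hIcc : ∀ᶠ y in 𝓝[Ici a] a, y ∈ Icc a (a + 1) := Icc_mem_nhdsGE (by linarith)
    exact tendsto_of_tendsto_of_tendsto_of_le_of_le' tendsto_const_nhds hlim
      (hIcc.mono fun y hy => hmono self_mem_Ici hy.1 hy.1) (hIcc.mono hchord)
  · have hint : x ∈ interior (Ici a) := by rwa [interior_Ici]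
    exact ((hconv.continuousOn_interior x hint).continuousAt
      (isOpen_interior.mem_nhds hint)).continuousWithinAt

theorem ConvexOn.ofReal_map_integral_le_lintegral {α E : Type*} [MeasurableSpace α]
    {μ : Measure α} [IsProbabilityMeasure μ] [NormedAddCommGroup E] [NormedSpace ℝ E]
    [CompleteSpace E] {s : Set E} {f : α → E} {g : E → ℝ}
    (hg : ConvexOn ℝ s g) (hgc : ContinuousOn g s) (hsc : IsClosed s)
    (hg0 : ∀ x ∈ s, 0 ≤ g x) (hfs : ∀ᵐ x ∂μ, f x ∈ s) (hfi : Integrable f μ)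
    (hgf : AEStronglyMeasurable (g ∘ f) μ) :
    ENNReal.ofReal (g (∫ x, f x ∂μ)) ≤ ∫⁻ x, ENNReal.ofReal (g (f x)) ∂μ := by
  have hnn : 0 ≤ᵐ[μ] g ∘ f := hfs.mono fun x hx => hg0 _ hx
  by_cases hfin : HasFiniteIntegral (g ∘ f) μ
  · have hgi : Integrable (g ∘ f) μ := ⟨hgf, hfin⟩
    exact (ENNReal.ofReal_le_ofReal (hg.map_integral_le hgc hsc hfs hfi hgi)).trans
      (ofReal_integral_eq_lintegral_ofReal hgi hnn).le
  · rw [hasFiniteIntegral_iff_ofReal hnn, not_lt, top_le_iff] at hfin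
    exact le_top.trans_eq hfin.symm

theorem norm_le_integral_norm_sub_of_integral_eq_zero {α E : Type*} [MeasurableSpace α]
    {μ : Measure α} [IsProbabilityMeasure μ] [NormedAddCommGroup E] [NormedSpace ℝ E]
    [CompleteSpace E] {X : α → E} (hX : Integrable X μ) (hX0 : ∫ x, X x ∂μ = 0) (u : E) :
    ‖u‖ ≤ ∫ x, ‖u - X x‖ ∂μ := by
  have hmean : ∫ x, (u - X x) ∂μ = u := by
    rw [integral_sub (integrable_const u) hX, hX0, sub_zero, integral_const, probReal_univ,
      one_smul]
  calc ‖u‖ = ‖∫ x, (u - X x) ∂μ‖ := by rw [hmean]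
    _ ≤ ∫ x, ‖u - X x‖ ∂μ := norm_integral_le_integral_norm _

theorem stmt8_general (d : ℕ)
    (ν : Measure (EuclideanSpace ℝ (Fin d))) [IsProbabilityMeasure ν]
    (hmom : Integrable (fun u => ‖u‖) ν)
    (hcm : ∫ u, u ∂ν = 0)
    (D : EuclideanSpace ℝ (Fin d) → EuclideanSpace ℝ (Fin d) → ℝ)
    (hD : ∀ u v, ‖u - v‖ ≤ D u v)
    (H : ℝ → ℝ)
    (hHmono : MonotoneOn H (Set.Ici 0))
    (hHconv : ConvexOn ℝ (Set.Ici 0) H)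
    (hHnonneg : ∀ θ ≥ (0:ℝ), 0 ≤ H θ) :
    ∫⁻ u, ENNReal.ofReal (H ‖u‖) ∂ν ≤
      ∫⁻ u, ∫⁻ v, ENNReal.ofReal (H (D u v)) ∂ν ∂ν := by
  have hid : Integrable (fun v => v) ν := (integrable_norm_iff aestronglyMeasurable_id).1 hmom
  have hHc : ContinuousOn H (Ici 0) := hHmono.continuousOn_of_convexOn_Ici hHconv
  refine lintegral_mono fun u => ?_
  have hdist : Integrable (fun v => ‖u - v‖) ν := ((integrable_const u).sub hid).norm
  have hHdist : Continuous fun v => H ‖u - v‖ :=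
    hHc.comp_continuous (by fun_prop) fun v => norm_nonneg (u - v)
  calc ENNReal.ofReal (H ‖u‖) ≤ ENNReal.ofReal (H (∫ v, ‖u - v‖ ∂ν)) :=
        ENNReal.ofReal_le_ofReal <| hHmono (norm_nonneg u)
          (mem_Ici.2 (integral_nonneg fun v => norm_nonneg _))
          (norm_le_integral_norm_sub_of_integral_eq_zero hid hcm u)
    _ ≤ ∫⁻ v, ENNReal.ofReal (H ‖u - v‖) ∂ν :=
        hHconv.ofReal_map_integral_le_lintegral hHc isClosed_Ici hHnonneg
          (ae_of_all _ fun v => norm_nonneg _) hdist hHdist.aestronglyMeasurable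
    _ ≤ ∫⁻ v, ENNReal.ofReal (H (D u v)) ∂ν :=
        lintegral_mono fun v => ENNReal.ofReal_le_ofReal <|
          hHmono (norm_nonneg _) ((norm_nonneg _).trans (hD u v)) (hD u v)

/-- Proposition 4.1 (tangent-space form): if `ν` is a probability measure on `ℝ^d` with
finite first moment and vanishing Bochner mean, `D(u,v) ≥ ‖u-v‖`, and `H` is a
non-decreasing convex function `[0,∞) → [0,∞)`, then
`∬ H(D(u,v)) dν dν ≥ ∫ H(‖u‖) dν`. -/
theorem stmt8 (d : ℕ) (hd : 1 ≤ d)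
    (ν : Measure (EuclideanSpace ℝ (Fin d))) [IsProbabilityMeasure ν]
    (hmom : Integrable (fun u => ‖u‖) ν)
    (hcm : ∫ u, u ∂ν = 0)
    (D : EuclideanSpace ℝ (Fin d) → EuclideanSpace ℝ (Fin d) → ℝ)
    (hDmeas : Measurable (Function.uncurry D))
    (hDnonneg : ∀ u v, 0 ≤ D u v)
    (hD : ∀ u v, ‖u - v‖ ≤ D u v)
    (H : ℝ → ℝ)
    (hHmono : MonotoneOn H (Set.Ici 0))
    (hHconv : ConvexOn ℝ (Set.Ici 0) H)
    (hHnonneg : ∀ θ ≥ (0:ℝ), 0 ≤ H θ) :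
    ∫⁻ u, ENNReal.ofReal (H ‖u‖) ∂ν ≤
      ∫⁻ u, ∫⁻ v, ENNReal.ofReal (H (D u v)) ∂ν ∂ν :=
  stmt8_general d ν hmom hcm D hD H hHmono hHconv hHnonneg
end

section
/- Let d ≥ 1 be an integer, let μ be a finite nonnegative Borel measure on ℝ^d with 0 < μ(ℝ^d) < ∞, ∫ ‖u‖ dμ(u) < ∞ and ∫ u dμ(u) = 0 (Bochner integral), let D : ℝ^d × ℝ^d → [0,∞) be a Borel measurable function with D(u,v) ≥ ‖u−v‖ for all u, v ∈ ℝ^d, and let H : [0,∞) → [0,∞) be a non-decreasing convex function. Then ∬_{ℝ^d×ℝ^d} H(D(u,v)) dμ(u) dμ(v) ≥ (∫_{ℝ^d} H(‖u‖) dμ(u)) · μ(ℝ^d), where the integrals take values in [0,∞]. -/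
open Set MeasureTheory
open scoped ENNReal

/-!
Since `H` is convex and non-decreasing, `w ↦ H ‖w‖` is convex. A centred measure has
`⨍ v, (u - v) ∂μ = u`, so Jensen's inequality gives `H ‖u‖ · μ(ℝ^d) ≤ ∫ H ‖u - v‖ dμ(v)` for every
`u`; integrating in `u` and using `‖u - v‖ ≤ D u v` with the monotonicity of `H` concludes.
-/

theorem ConvexOn.comp_norm {E : Type*} [SeminormedAddCommGroup E] [NormedSpace ℝ E] {H : ℝ → ℝ}
    (hconv : ConvexOn ℝ (Ici 0) H) (hmono : MonotoneOn H (Ici 0)) :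
    ConvexOn ℝ univ fun x : E => H ‖x‖ := by
  refine ⟨convex_univ, fun x _ y _ a b ha hb hab => ?_⟩
  calc H ‖a • x + b • y‖ ≤ H (a * ‖x‖ + b * ‖y‖) :=
        hmono (norm_nonneg _) (mem_Ici.mpr (by positivity)) ((norm_add_le _ _).trans_eq <| by
          rw [norm_smul, norm_smul, Real.norm_of_nonneg ha, Real.norm_of_nonneg hb])
    _ ≤ a • H ‖x‖ + b • H ‖y‖ := hconv.2 (norm_nonneg x) (norm_nonneg y) ha hb hab

section Jensen

variable {α E : Type*} [NormedAddCommGroup E] [NormedSpace ℝ E] [CompleteSpace E]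
  {g : E → ℝ}

theorem ConvexOn.ofReal_map_average_mul_le_lintegral [MeasurableSpace α] {μ : Measure α}
    [IsFiniteMeasure μ] [NeZero μ] (hg : ConvexOn ℝ univ g) (hgc : Continuous g)
    (hg0 : ∀ x, 0 ≤ g x) {f : α → E} (hf : Integrable f μ) :
    ENNReal.ofReal (g (⨍ x, f x ∂μ)) * μ univ ≤ ∫⁻ x, ENNReal.ofReal (g (f x)) ∂μ := by
  have hgf0 : 0 ≤ᵐ[μ] (g ∘ f) := ae_of_all _ fun x => hg0 (f x)
  by_cases hgf : Integrable (g ∘ f) μ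
  · have jensen := hg.map_average_le hgc.continuousOn isClosed_univ
      (ae_of_all _ fun _ => mem_univ _) hf hgf
    calc ENNReal.ofReal (g (⨍ x, f x ∂μ)) * μ univ
        ≤ ENNReal.ofReal (⨍ x, g (f x) ∂μ) * ENNReal.ofReal (μ.real univ) := by
          rw [ofReal_measureReal]
          gcongr
      _ = ENNReal.ofReal (∫ x, g (f x) ∂μ) := by
          rw [← ENNReal.ofReal_mul' measureReal_nonneg, mul_comm, ← smul_eq_mul,
            measure_smul_average]
      _ = ∫⁻ x, ENNReal.ofReal (g (f x)) ∂μ := ofReal_integral_eq_lintegral_ofReal hgf hgf0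
  · have htop : ∫⁻ x, ENNReal.ofReal (g (f x)) ∂μ = ∞ := not_ne_iff.mp fun h => hgf <|
      (lintegral_ofReal_ne_top_iff_integrable (hgc.comp_aestronglyMeasurable hf.1) hgf0).mp h
    exact htop ▸ le_top

theorem ConvexOn.ofReal_mul_measure_univ_le_lintegral_sub [MeasurableSpace E] {μ : Measure E}
    [IsFiniteMeasure μ] (hg : ConvexOn ℝ univ g) (hgc : Continuous g) (hg0 : ∀ x, 0 ≤ g x)
    (hμ : Integrable (fun v => v) μ) (hcm : ∫ v, v ∂μ = 0) (u : E) :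
    ENNReal.ofReal (g u) * μ univ ≤ ∫⁻ v, ENNReal.ofReal (g (u - v)) ∂μ := by
  rcases eq_zero_or_neZero μ with rfl | _
  · simp
  have hmean : ⨍ v, (u - v) ∂μ = u := by
    rw [average_eq, integral_sub (integrable_const u) hμ, hcm, sub_zero, integral_const,
      smul_smul, inv_mul_cancel₀ measureReal_univ_ne_zero, one_smul]
  have hf : Integrable (fun v => u - v) μ := (integrable_const u).sub hμ
  simpa only [hmean] using hg.ofReal_map_average_mul_le_lintegral hgc hg0 hf

end Jensen

theorem stmt9_general (d : ℕ)
    (μ : Measure (EuclideanSpace ℝ (Fin d)))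
    (hμfin : μ Set.univ < ⊤)
    (hmom : Integrable (fun u => ‖u‖) μ)
    (hcm : ∫ u, u ∂μ = 0)
    (D : EuclideanSpace ℝ (Fin d) → EuclideanSpace ℝ (Fin d) → ℝ)
    (hD : ∀ u v, ‖u - v‖ ≤ D u v)
    (H : ℝ → ℝ)
    (hHmono : MonotoneOn H (Set.Ici 0))
    (hHconv : ConvexOn ℝ (Set.Ici 0) H)
    (hHnonneg : ∀ θ ≥ (0:ℝ), 0 ≤ H θ) :
    (∫⁻ u, ENNReal.ofReal (H ‖u‖) ∂μ) * μ Set.univ ≤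
      ∫⁻ u, ∫⁻ v, ENNReal.ofReal (H (D u v)) ∂μ ∂μ := by
  have : IsFiniteMeasure μ := ⟨hμfin⟩
  have hconv : ConvexOn ℝ univ fun w : EuclideanSpace ℝ (Fin d) => H ‖w‖ :=
    hHconv.comp_norm hHmono
  have hcont : Continuous fun w : EuclideanSpace ℝ (Fin d) => H ‖w‖ :=
    continuousOn_univ.mp (hconv.continuousOn isOpen_univ)
  have hid : Integrable (fun v => v) μ := (integrable_norm_iff aestronglyMeasurable_id).mp hmom
  calc (∫⁻ u, ENNReal.ofReal (H ‖u‖) ∂μ) * μ univ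
      = ∫⁻ u, ENNReal.ofReal (H ‖u‖) * μ univ ∂μ := (lintegral_mul_const' _ _ hμfin.ne).symm
    _ ≤ ∫⁻ u, ∫⁻ v, ENNReal.ofReal (H ‖u - v‖) ∂μ ∂μ := lintegral_mono fun u =>
        hconv.ofReal_mul_measure_univ_le_lintegral_sub hcont (fun w => hHnonneg _ (norm_nonneg w))
          hid hcm u
    _ ≤ ∫⁻ u, ∫⁻ v, ENNReal.ofReal (H (D u v)) ∂μ ∂μ :=
        lintegral_mono fun u => lintegral_mono fun v => ENNReal.ofReal_le_ofReal <|
          hHmono (norm_nonneg _) ((norm_nonneg _).trans (hD u v)) (hD u v)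

/-- Remark 4.1 (tangent-space form): if `μ` is a finite nonnegative measure on `ℝ^d` with
`0 < μ(ℝ^d) < ∞`, finite first moment and vanishing Bochner mean, `D(u,v) ≥ ‖u-v‖`, and
`H` is a non-decreasing convex function `[0,∞) → [0,∞)`, then
`∬ H(D(u,v)) dμ dμ ≥ (∫ H(‖u‖) dμ) · μ(ℝ^d)`. -/
theorem stmt9 (d : ℕ) (hd : 1 ≤ d)
    (μ : Measure (EuclideanSpace ℝ (Fin d)))
    (hμpos : 0 < μ Set.univ) (hμfin : μ Set.univ < ⊤)
    (hmom : Integrable (fun u => ‖u‖) μ)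
    (hcm : ∫ u, u ∂μ = 0)
    (D : EuclideanSpace ℝ (Fin d) → EuclideanSpace ℝ (Fin d) → ℝ)
    (hDmeas : Measurable (Function.uncurry D))
    (hDnonneg : ∀ u v, 0 ≤ D u v)
    (hD : ∀ u v, ‖u - v‖ ≤ D u v)
    (H : ℝ → ℝ)
    (hHmono : MonotoneOn H (Set.Ici 0))
    (hHconv : ConvexOn ℝ (Set.Ici 0) H)
    (hHnonneg : ∀ θ ≥ (0:ℝ), 0 ≤ H θ) :
    (∫⁻ u, ENNReal.ofReal (H ‖u‖) ∂μ) * μ Set.univ ≤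
      ∫⁻ u, ∫⁻ v, ENNReal.ofReal (H (D u v)) ∂μ ∂μ :=
  stmt9_general d μ hμfin hmom hcm D hD H hHmono hHconv hHnonneg
end

section
/- Let d ≥ 2 be an integer, c > 0, 0 < q < 1, a > 0, and let h : [0,∞) → ℝ be a function satisfying lim_{θ→∞} h(θ)/exp((√c·(d−1)·(1−q)/2)·θ) = 0. Then lim_{R→∞} [ −(1/(1−q)) · (a·∫₀^R (sinh(√c·θ)/√c)^{d−1} dθ)^{1−q} + h(2R)/2 ] = −∞. -/
/-!
The free-energy bound is `-V(R)^{1-q}/(1-q) + h(2R)/2` with `V(R) = a∫₀^R (sinh(√c θ)/√c)^{d-1} dθ`.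
Since `sinh x ≥ eˣ/4` for large `x`, the integrand at `θ = R - 1` already gives
`V(R) ≥ A e^{√c(d-1)R}`, so the negative term is at least of order `e^{√c(d-1)(1-q)R}`,
which is exactly the rate that `h(2R)` is assumed to be negligible against.
-/

open Real Filter MeasureTheory Topology

lemma exp_div_four_le_sinh {x : ℝ} (hx : Real.log 2 ≤ 2 * x) : exp x / 4 ≤ sinh x := by
  have hpos := exp_pos x
  have h2 : 2 ≤ exp x * exp x := by
    rw [← exp_add, ← two_mul]
    exact (exp_log two_pos).ge.trans (exp_le_exp.mpr hx)
  have : (exp x)⁻¹ ≤ exp x / 2 := by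
    rw [inv_le_iff_one_le_mul₀ hpos]
    nlinarith
  rw [sinh_eq, exp_neg]
  linarith

lemma mul_le_intervalIntegral_of_monotoneOn {f : ℝ → ℝ} {t R : ℝ} (ht : 0 ≤ t) (htR : t ≤ R)
    (hf : MonotoneOn f (Set.Ici 0)) (hf0 : 0 ≤ f 0) :
    (R - t) * f t ≤ ∫ x in (0 : ℝ)..R, f x := by
  have hint : ∀ {u v : ℝ}, 0 ≤ u → u ≤ v → IntervalIntegrable f volume u v := fun hu huv =>
    (hf.mono fun _ hx => le_trans hu (Set.uIcc_of_le huv ▸ hx).1).intervalIntegrable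
  have hleft : 0 ≤ ∫ x in (0 : ℝ)..t, f x :=
    intervalIntegral.integral_nonneg ht fun x hx => hf0.trans (hf Set.self_mem_Ici hx.1 hx.1)
  have hright : (R - t) * f t ≤ ∫ x in t..R, f x := by
    have := intervalIntegral.integral_mono_on htR intervalIntegrable_const (hint ht htR)
      fun x hx => hf ht (ht.trans hx.1) hx.1
    simpa using this
  rw [← intervalIntegral.integral_add_adjacent_intervals (hint le_rfl ht) (hint ht htR)]
  linarith

lemma monotoneOn_sinh_mul_div_pow {s : ℝ} (hs : 0 < s) (n : ℕ) :
    MonotoneOn (fun θ => (sinh (s * θ) / s) ^ n) (Set.Ici 0) := by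
  intro x hx y _ hxy
  have hx' : 0 ≤ s * x := mul_nonneg hs.le hx
  dsimp only
  have := sinh_nonneg_iff.mpr hx'
  gcongr
  exact sinh_le_sinh.mpr (by gcongr)

lemma exists_exp_le_intervalIntegral_sinh_pow {s : ℝ} (hs : 0 < s) (n : ℕ) :
    ∃ A > 0, ∀ᶠ R in atTop, A * exp (n * s * R) ≤ ∫ θ in (0 : ℝ)..R, (sinh (s * θ) / s) ^ n := by
  refine ⟨exp (-(n * s)) / (4 * s) ^ n, by positivity, ?_⟩
  filter_upwards [eventually_ge_atTop (1 + Real.log 2 / s)] with R hR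
  have hRs : Real.log 2 ≤ s * (R - 1) := by
    rw [← div_le_iff₀' hs]; linarith
  have hlog2 : 0 ≤ Real.log 2 := log_nonneg one_le_two
  have hR1 : 0 ≤ R - 1 := le_trans (div_nonneg hlog2 hs.le) (by linarith)
  calc exp (-(n * s)) / (4 * s) ^ n * exp (n * s * R)
      = exp (s * (R - 1)) ^ n / (4 * s) ^ n := by
        rw [div_mul_eq_mul_div, ← exp_add, ← exp_nat_mul]; ring_nf
    _ = (exp (s * (R - 1)) / 4 / s) ^ n := by rw [div_div, div_pow]
    _ ≤ (sinh (s * (R - 1)) / s) ^ n := by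
        gcongr
        exact exp_div_four_le_sinh (by linarith)
    _ = (R - (R - 1)) * (sinh (s * (R - 1)) / s) ^ n := by ring
    _ ≤ ∫ θ in (0 : ℝ)..R, (sinh (s * θ) / s) ^ n :=
        mul_le_intervalIntegral_of_monotoneOn hR1 (by linarith)
          (monotoneOn_sinh_mul_div_pow hs n) (by simp)

lemma tendsto_neg_add_atBot_of_div_tendsto_zero {α : Type*} {l : Filter α} {e f g : α → ℝ}
    {C : ℝ} (hC : 0 < C) (he : Tendsto e l atTop) (hf : ∀ᶠ x in l, C * e x ≤ f x)
    (hg : Tendsto (fun x => g x / e x) l (𝓝 0)) :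
    Tendsto (fun x => -f x + g x) l atBot := by
  have hlim : Tendsto (fun x => e x * (g x / e x - C)) l atBot :=
    he.atTop_mul_neg (by simpa using hC) (hg.sub_const C)
  refine tendsto_atBot_mono' l ?_ hlim
  filter_upwards [hf, he.eventually_gt_atTop 0] with x hfx hex
  rw [mul_sub, mul_div_cancel₀ _ hex.ne']
  linarith

theorem stmt12_general (d : ℕ) (hd : 2 ≤ d) (c q a : ℝ) (hc : 0 < c)
    (hq1 : q < 1) (ha : 0 < a)
    (h : ℝ → ℝ)
    (hh : Tendsto (fun θ => h θ / Real.exp (Real.sqrt c * ((d:ℝ) - 1) * (1 - q) / 2 * θ))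
      atTop (𝓝 0)) :
    Tendsto (fun R : ℝ =>
        -(1 / (1 - q)) *
            (a * ∫ θ in (0:ℝ)..R, (Real.sinh (Real.sqrt c * θ) / Real.sqrt c) ^ (d - 1))
              ^ (1 - q)
          + h (2 * R) / 2)
      atTop atBot := by
  set s := √c
  have hs : 0 < s := sqrt_pos.mpr hc
  have hq : 0 < 1 - q := by linarith
  have hn : ((d - 1 : ℕ) : ℝ) = d - 1 := by rw [Nat.cast_sub (by omega), Nat.cast_one]
  set β := s * ((d : ℝ) - 1) * (1 - q) / 2 with hβ_def
  have hβ : 0 < β := by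
    have : (1 : ℝ) < d := by exact_mod_cast hd
    have : 0 < (d : ℝ) - 1 := by linarith
    positivity
  obtain ⟨A, hA, hV⟩ := exists_exp_le_intervalIntegral_sinh_pow hs (d - 1)
  simp only [neg_mul]
  refine tendsto_neg_add_atBot_of_div_tendsto_zero (e := fun R => exp (β * (2 * R)))
    (C := (a * A) ^ (1 - q) / (1 - q)) (by positivity)
    (tendsto_exp_atTop.comp ((tendsto_id.const_mul_atTop two_pos).const_mul_atTop hβ)) ?_ ?_
  · filter_upwards [hV] with R hR
    have hpow : ((a * A) * exp ((d - 1 : ℕ) * s * R)) ^ (1 - q)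
        ≤ (a * ∫ θ in (0 : ℝ)..R, (sinh (s * θ) / s) ^ (d - 1)) ^ (1 - q) := by
      rw [mul_assoc]
      gcongr
    rw [mul_rpow (by positivity) (exp_pos _).le, ← exp_mul, hn] at hpow
    calc (a * A) ^ (1 - q) / (1 - q) * exp (β * (2 * R))
        = 1 / (1 - q) * ((a * A) ^ (1 - q) * exp ((d - 1) * s * R * (1 - q))) := by
          rw [hβ_def]; ring_nf
      _ ≤ _ := by gcongr
  · have := (hh.comp (tendsto_id.const_mul_atTop two_pos)).div_const 2
    rw [zero_div] at this
    refine this.congr fun R => ?_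
    exact div_right_comm _ _ _

/-- Analytic core of Theorem 3.1 (nonexistence by spreading): if `h` grows slower than
`exp(√c(d-1)(1-q)θ/2)` at infinity, then the energy upper bound
`-(1/(1-q))(a∫₀^R(sinh(√c θ)/√c)^{d-1}dθ)^{1-q} + h(2R)/2` tends to `-∞` as `R → ∞`. -/
theorem stmt12 (d : ℕ) (hd : 2 ≤ d) (c q a : ℝ) (hc : 0 < c)
    (hq0 : 0 < q) (hq1 : q < 1) (ha : 0 < a)
    (h : ℝ → ℝ)
    (hh : Tendsto (fun θ => h θ / Real.exp (Real.sqrt c * ((d:ℝ) - 1) * (1 - q) / 2 * θ))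
      atTop (𝓝 0)) :
    Tendsto (fun R : ℝ =>
        -(1 / (1 - q)) *
            (a * ∫ θ in (0:ℝ)..R, (Real.sinh (Real.sqrt c * θ) / Real.sqrt c) ^ (d - 1))
              ^ (1 - q)
          + h (2 * R) / 2)
      atTop atBot :=
  stmt12_general d hd c q a hc hq1 ha h hh
end

section
/- Let d ≥ 2 be an integer, 0 < q < 1 and a > 0. Let c : [0,∞) → ℝ be continuous and positive with lim_{θ→∞} D̄c(θ)/c(θ)^{3/2} = 0, where D̄c(θ) = limsup_{h→0}(c(θ+h)−c(θ))/h, and let ψ : [0,∞) → ℝ be twice differentiable with ψ''(θ) = c(θ)·ψ(θ) for θ > 0, ψ(0) = 0, ψ'(0) = 1. Assume h : [0,∞) → ℝ is a function for which there exist δ > 0 and ε ∈ (0,1) such that lim_{θ→∞} h(θ)/exp((1−ε)·(d−1)·(1−q)·∫₀^{θ/2−δ} √(c(t)) dt) = 0. Then lim_{R→∞} [ −(1/(1−q))·(a·∫₀^R ψ(θ)^{d−1} dθ)^{1−q} + h(2R)/2 ] = −∞. -/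
open Real Filter Set MeasureTheory Topology

section Aux

variable {c ψ ψ' : ℝ → ℝ}
variable (hc_pos : ∀ θ ≥ (0:ℝ), 0 < c θ)
variable (hψ : ∀ θ ≥ (0:ℝ), HasDerivAt ψ (ψ' θ) θ)
variable (hψ'' : ∀ θ > (0:ℝ), HasDerivAt ψ' (c θ * ψ θ) θ)
variable (hψ0 : ψ 0 = 0) (hψ'0 : ψ' 0 = 1)

include hψ hψ0 hψ'0 in
/-- slope of ψ at 0 tends to 1 -/
lemma slope_tendsto : Tendsto (fun t => ψ t / t) (𝓝[>] (0:ℝ)) (𝓝 1) := by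
  have h0 := (hasDerivAt_iff_tendsto_slope.1 (hψ 0 le_rfl))
  rw [hψ'0] at h0
  have h1 : Tendsto (slope ψ 0) (𝓝[>] (0:ℝ)) (𝓝 1) :=
    h0.mono_left (nhdsWithin_mono _ (fun x hx => ne_of_gt hx))
  refine h1.congr' ?_
  filter_upwards [self_mem_nhdsWithin] with t ht
  simp [slope, hψ0, div_eq_inv_mul]

include hψ hψ0 hψ'0 in
lemma psi_pos_near_zero : ∃ η > (0:ℝ), ∀ t, 0 < t → t < η → 0 < ψ t := by
  have h1 : ∀ᶠ t in 𝓝[>] (0:ℝ), (1:ℝ)/2 < ψ t / t :=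
    (slope_tendsto hψ hψ0 hψ'0).eventually (eventually_gt_nhds (by norm_num : (1:ℝ)/2 < 1))
  rw [eventually_nhdsWithin_iff] at h1
  rcases Metric.eventually_nhds_iff.1 h1 with ⟨η, hη, hball⟩
  refine ⟨η, hη, fun t ht htη => ?_⟩
  have h2 : (1:ℝ)/2 < ψ t / t := hball (by simpa [abs_of_pos ht] using htη) ht
  nlinarith [(lt_div_iff₀ ht).1 h2]

end Aux

section Aux2

variable {c ψ ψ' : ℝ → ℝ}
variable (hc_pos : ∀ θ ≥ (0:ℝ), 0 < c θ)
variable (hψ : ∀ θ ≥ (0:ℝ), HasDerivAt ψ (ψ' θ) θ)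
variable (hψ'' : ∀ θ > (0:ℝ), HasDerivAt ψ' (c θ * ψ θ) θ)
variable (hψ0 : ψ 0 = 0) (hψ'0 : ψ' 0 = 1)

include hc_pos hψ'' in
lemma psi'_mono_of_pos {s t : ℝ} (hs : 0 < s) (hst : s ≤ t)
    (hpos : ∀ x ∈ Icc s t, 0 ≤ ψ x) : ψ' s ≤ ψ' t := by
  have hmono : MonotoneOn ψ' (Icc s t) := by
    apply monotoneOn_of_deriv_nonneg (convex_Icc s t)
    · exact fun x hx => ((hψ'' x (lt_of_lt_of_le hs hx.1)).continuousAt).continuousWithinAt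
    · intro x hx
      rw [interior_Icc] at hx
      exact ((hψ'' x (lt_trans hs hx.1)).differentiableAt).differentiableWithinAt
    · intro x hx
      rw [interior_Icc] at hx
      have hx' : (0:ℝ) < x := lt_trans hs hx.1
      rw [(hψ'' x hx').deriv]
      exact mul_nonneg (hc_pos x hx'.le).le (hpos x ⟨hx.1.le, hx.2.le⟩)
  exact hmono ⟨le_refl s, hst⟩ ⟨hst, le_refl t⟩ hst

include hc_pos hψ hψ'' hψ0 hψ'0 in
lemma psi_pos : ∀ θ > (0:ℝ), 0 < ψ θ := by
  obtain ⟨η, hη, hnear⟩ := psi_pos_near_zero hψ hψ0 hψ'0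
  by_contra hcon
  push_neg at hcon
  obtain ⟨θb, hθb, hψθb⟩ := hcon
  set Z : Set ℝ := {θ | 0 < θ ∧ ψ θ ≤ 0} with hZ
  have hZne : Z.Nonempty := ⟨θb, hθb, hψθb⟩
  have hZbd : ∀ z ∈ Z, η ≤ z := by
    intro z hz
    by_contra hzη
    push_neg at hzη
    exact absurd (hnear z hz.1 hzη) (not_lt.2 hz.2)
  have hbdd : BddBelow Z := ⟨η, hZbd⟩
  set θ₁ := sInf Z with hθ₁def
  have hθ₁η : η ≤ θ₁ := le_csInf hZne hZbd
  have hθ₁pos : 0 < θ₁ := lt_of_lt_of_le hη hθ₁η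
  have hbelow : ∀ x, 0 < x → x < θ₁ → 0 < ψ x := by
    intro x hx hxθ₁
    by_contra hc
    push_neg at hc
    exact absurd (csInf_le hbdd ⟨hx, hc⟩) (not_le.2 hxθ₁)
  -- ψ θ₁ ≤ 0
  have hψθ₁ : ψ θ₁ ≤ 0 := by
    by_contra hpos
    push_neg at hpos
    have hcontψ : ContinuousAt ψ θ₁ := (hψ θ₁ hθ₁pos.le).continuousAt
    have hev : ∀ᶠ x in 𝓝 θ₁, 0 < ψ x := hcontψ.eventually (eventually_gt_nhds hpos)
    rcases Metric.eventually_nhds_iff.1 hev with ⟨r, hr, hball⟩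
    have : θ₁ + r/2 ≤ θ₁ := by
      apply le_csInf hZne
      intro z hz
      by_contra hlt
      push_neg at hlt
      have hzpos : 0 < ψ z := by
        rcases lt_or_ge z θ₁ with h1 | h1
        · rcases lt_or_ge (θ₁ - r) z with h2 | h2
          · exact hball (by rw [Real.dist_eq]; rw [abs_lt]; constructor <;> linarith)
          · exact hbelow z hz.1 h1
        · exact hball (by rw [Real.dist_eq]; rw [abs_lt]; constructor <;> linarith)
      exact absurd hzpos (not_lt.2 hz.2)
    linarith
  -- MVT on [0, θ₁]: some ξ with ψ' ξ = ψ θ₁ / θ₁ ≤ 0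
  have hMVT : ∃ ξ ∈ Ioo (0:ℝ) θ₁, ψ' ξ = (ψ θ₁ - ψ 0) / (θ₁ - 0) := by
    apply exists_hasDerivAt_eq_slope ψ ψ' hθ₁pos
    · exact fun x hx => (hψ x hx.1).continuousAt.continuousWithinAt
    · exact fun x hx => hψ x hx.1.le
  obtain ⟨ξ, hξ, hξval⟩ := hMVT
  have hψ'ξ : ψ' ξ ≤ 0 := by
    rw [hξval, hψ0]
    apply div_nonpos_of_nonpos_of_nonneg <;> linarith
  -- MVT on [0, ξ]: some ζ with ψ' ζ = ψ ξ / ξ > 0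
  have hMVT2 : ∃ ζ ∈ Ioo (0:ℝ) ξ, ψ' ζ = (ψ ξ - ψ 0) / (ξ - 0) := by
    apply exists_hasDerivAt_eq_slope ψ ψ' hξ.1
    · exact fun x hx => (hψ x hx.1).continuousAt.continuousWithinAt
    · exact fun x hx => hψ x hx.1.le
  obtain ⟨ζ, hζ, hζval⟩ := hMVT2
  have hψζpos : 0 < ψ ξ := hbelow ξ hξ.1 hξ.2
  have hψ'ζ : 0 < ψ' ζ := by
    rw [hζval, hψ0]
    apply div_pos (by linarith) (by linarith [hξ.1])
  have hmono : ψ' ζ ≤ ψ' ξ := by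
    apply psi'_mono_of_pos hc_pos hψ'' hζ.1 hζ.2.le
    intro x hx
    exact (hbelow x (lt_of_lt_of_le hζ.1 hx.1) (lt_of_le_of_lt hx.2 hξ.2)).le
  linarith

end Aux2

section Aux3

variable {c ψ ψ' : ℝ → ℝ}
variable (hc_pos : ∀ θ ≥ (0:ℝ), 0 < c θ)
variable (hψ : ∀ θ ≥ (0:ℝ), HasDerivAt ψ (ψ' θ) θ)
variable (hψ'' : ∀ θ > (0:ℝ), HasDerivAt ψ' (c θ * ψ θ) θ)
variable (hψ0 : ψ 0 = 0) (hψ'0 : ψ' 0 = 1)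

include hc_pos hψ hψ'' hψ0 hψ'0 in
lemma psi'_mono : ∀ s t : ℝ, 0 < s → s ≤ t → ψ' s ≤ ψ' t := by
  intro s t hs hst
  apply psi'_mono_of_pos hc_pos hψ'' hs hst
  intro x hx
  exact (psi_pos hc_pos hψ hψ'' hψ0 hψ'0 x (lt_of_lt_of_le hs hx.1)).le

include hc_pos hψ hψ'' hψ0 hψ'0 in
lemma psi'_ge_one : ∀ θ > (0:ℝ), 1 ≤ ψ' θ := by
  intro θ hθ
  have hslope := slope_tendsto hψ hψ0 hψ'0
  apply le_of_tendsto hslope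
  filter_upwards [self_mem_nhdsWithin, Ioo_mem_nhdsGT hθ] with t ht htθ
  -- t ∈ (0, θ); MVT on [0,t] gives ξ with ψ' ξ = ψ t / t, then ψ' θ ≥ ψ' ξ
  obtain ⟨ξ, hξ, hξval⟩ : ∃ ξ ∈ Ioo (0:ℝ) t, ψ' ξ = (ψ t - ψ 0) / (t - 0) := by
    apply exists_hasDerivAt_eq_slope ψ ψ' ht
    · exact fun x hx => (hψ x hx.1).continuousAt.continuousWithinAt
    · exact fun x hx => hψ x hx.1.le
  have : ψ' ξ ≤ ψ' θ :=
    psi'_mono hc_pos hψ hψ'' hψ0 hψ'0 ξ θ hξ.1 (le_of_lt (lt_trans hξ.2 htθ.2))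
  rw [hξval, hψ0] at this
  simpa using this

include hc_pos hψ hψ'' hψ0 hψ'0 in
lemma psi_ge_id : ∀ θ ≥ (0:ℝ), θ ≤ ψ θ := by
  intro θ hθ
  rcases eq_or_lt_of_le hθ with h | h
  · simp [← h, hψ0]
  obtain ⟨ξ, hξ, hξval⟩ : ∃ ξ ∈ Ioo (0:ℝ) θ, ψ' ξ = (ψ θ - ψ 0) / (θ - 0) := by
    apply exists_hasDerivAt_eq_slope ψ ψ' h
    · exact fun x hx => (hψ x hx.1).continuousAt.continuousWithinAt
    · exact fun x hx => hψ x hx.1.le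
  have h1 : 1 ≤ ψ' ξ := psi'_ge_one hc_pos hψ hψ'' hψ0 hψ'0 ξ hξ.1
  rw [hξval, hψ0, sub_zero, sub_zero, le_div_iff₀ h] at h1
  linarith

include hc_pos hψ hψ'' hψ0 hψ'0 in
lemma psi_mono : ∀ s t : ℝ, 0 ≤ s → s ≤ t → ψ s ≤ ψ t := by
  intro s t hs hst
  have hmono : MonotoneOn ψ (Icc s t) := by
    apply monotoneOn_of_deriv_nonneg (convex_Icc s t)
    · exact fun x hx => (hψ x (le_trans hs hx.1)).continuousAt.continuousWithinAt
    · intro x hx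
      rw [interior_Icc] at hx
      exact ((hψ x (le_trans hs hx.1.le)).differentiableAt).differentiableWithinAt
    · intro x hx
      rw [interior_Icc] at hx
      have hx0 : 0 < x := lt_of_le_of_lt hs hx.1
      rw [(hψ x hx0.le).deriv]
      linarith [psi'_ge_one hc_pos hψ hψ'' hψ0 hψ'0 x hx0]
  exact hmono ⟨le_refl s, hst⟩ ⟨hst, le_refl t⟩ hst

end Aux3

section Aux4

variable {c ψ ψ' : ℝ → ℝ}
variable (hc_cont : ContinuousOn c (Set.Ici 0))
variable (hc_pos : ∀ θ ≥ (0:ℝ), 0 < c θ)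
variable (hψ : ∀ θ ≥ (0:ℝ), HasDerivAt ψ (ψ' θ) θ)
variable (hψ'' : ∀ θ > (0:ℝ), HasDerivAt ψ' (c θ * ψ θ) θ)
variable (hψ0 : ψ 0 = 0) (hψ'0 : ψ' 0 = 1)

include hc_cont hc_pos hψ hψ'' hψ0 hψ'0 in
lemma key_integral {x : ℝ} (hx : 1 ≤ x) :
    ∫ t in (0:ℝ)..x, Real.sqrt (c t) ≤ (Real.log (ψ x) + Real.log (ψ' x))/2
      + ((∫ t in (0:ℝ)..1, Real.sqrt (c t)) - (Real.log (ψ 1) + Real.log (ψ' 1))/2) := by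
  have hψpos := psi_pos hc_pos hψ hψ'' hψ0 hψ'0
  have hψ'ge := psi'_ge_one hc_pos hψ hψ'' hψ0 hψ'0
  set G : ℝ → ℝ := fun y => (Real.log (ψ y) + Real.log (ψ' y))/2 with hGdef
  set G' : ℝ → ℝ := fun y => (ψ' y / ψ y + c y * ψ y / ψ' y)/2 with hG'def
  have hG : ∀ y > (0:ℝ), HasDerivAt G (G' y) y := by
    intro y hy
    exact (((hψ y hy.le).log (hψpos y hy).ne').add
      ((hψ'' y hy).log (by linarith [hψ'ge y hy]))).div_const 2
  -- continuity facts
  have hsqrtc : ∀ {a b : ℝ}, 0 ≤ a → ContinuousOn (fun t => Real.sqrt (c t)) (Icc a b) := by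
    intro a b ha
    exact Real.continuous_sqrt.comp_continuousOn
      (hc_cont.mono (fun z hz => le_trans ha hz.1))
  have hint1 : IntervalIntegrable (fun t => Real.sqrt (c t)) volume 0 1 :=
    (hsqrtc le_rfl).intervalIntegrable_of_Icc zero_le_one
  have hint2 : IntervalIntegrable (fun t => Real.sqrt (c t)) volume 1 x :=
    (hsqrtc zero_le_one).intervalIntegrable_of_Icc hx
  have hcontψ : ContinuousOn ψ (Icc 1 x) :=
    fun t ht => (hψ t (by linarith [ht.1])).continuousAt.continuousWithinAt
  have hcontψ' : ContinuousOn ψ' (Icc 1 x) :=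
    fun t ht => (hψ'' t (by linarith [ht.1])).continuousAt.continuousWithinAt
  have hcontG' : ContinuousOn G' (Icc 1 x) := by
    apply ContinuousOn.div_const
    apply ContinuousOn.add
    · exact hcontψ'.div hcontψ (fun t ht => (hψpos t (by linarith [ht.1])).ne')
    · exact (((hc_cont.mono (fun z hz => by
        simp only [mem_Ici]; linarith [hz.1] : Icc (1:ℝ) x ⊆ Ici 0)).mul hcontψ).div hcontψ'
        (fun t ht => by linarith [hψ'ge t (by linarith [ht.1] : (0:ℝ) < t)]))
  have hintG' : IntervalIntegrable G' volume 1 x := hcontG'.intervalIntegrable_of_Icc hx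
  -- pointwise AM-GM
  have hptwise : ∀ t ∈ Icc (1:ℝ) x, Real.sqrt (c t) ≤ G' t := by
    intro t ht
    have ht0 : (0:ℝ) < t := by linarith [ht.1]
    have hc0 : 0 < c t := hc_pos t ht0.le
    have hu : 0 < ψ' t / ψ t := div_pos (by linarith [hψ'ge t ht0]) (hψpos t ht0)
    have hcu : c t * ψ t / ψ' t = c t / (ψ' t / ψ t) := by
      field_simp
    have hsq : Real.sqrt (c t) ^ 2 = c t := Real.sq_sqrt hc0.le
    have hsqnn : 0 ≤ Real.sqrt (c t) := Real.sqrt_nonneg _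
    simp only [hG'def, hcu]
    set u := ψ' t / ψ t with hudef
    rw [le_div_iff₀ (by norm_num : (0:ℝ) < 2)]
    have hcuu : c t / u * u = c t := div_mul_cancel₀ _ hu.ne'
    nlinarith [sq_nonneg (Real.sqrt (c t) - u), hsq, hu, hcuu]
  -- assemble
  have hsplit : ∫ t in (0:ℝ)..x, Real.sqrt (c t)
      = (∫ t in (0:ℝ)..1, Real.sqrt (c t)) + ∫ t in (1:ℝ)..x, Real.sqrt (c t) :=
    (intervalIntegral.integral_add_adjacent_intervals hint1 hint2).symm
  have hmono : ∫ t in (1:ℝ)..x, Real.sqrt (c t) ≤ ∫ t in (1:ℝ)..x, G' t :=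
    intervalIntegral.integral_mono_on hx hint2 hintG' hptwise
  have hftc : ∫ t in (1:ℝ)..x, G' t = G x - G 1 := by
    apply intervalIntegral.integral_eq_sub_of_hasDerivAt
    · intro t ht
      rw [uIcc_of_le hx] at ht
      exact hG t (by linarith [ht.1])
    · exact hintG'
  rw [hsplit]
  have : G x - G 1 = (Real.log (ψ x) + Real.log (ψ' x))/2
      - (Real.log (ψ 1) + Real.log (ψ' 1))/2 := rfl
  linarith [hmono.trans_eq hftc]

end Aux4

set_option maxHeartbeats 1000000 in
/-- Analytic core of Theorem 6.1 (nonexistence by spreading, unbounded curvature):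
with `ψ'' = c ψ`, `ψ(0)=0`, `ψ'(0)=1`, the Dini condition on `c`, and `h` growing slower
than `exp((1-ε)(d-1)(1-q)∫₀^{θ/2-δ}√c)`, the quantity
`-(1/(1-q))(a∫₀^R ψ^{d-1})^{1-q} + h(2R)/2` tends to `-∞`. -/
theorem stmt13 (d : ℕ) (hd : 2 ≤ d) (q a : ℝ) (hq0 : 0 < q) (hq1 : q < 1) (ha : 0 < a)
    (c ψ ψ' : ℝ → ℝ)
    (hc_cont : ContinuousOn c (Set.Ici 0))
    (hc_pos : ∀ θ ≥ (0:ℝ), 0 < c θ)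
    (hDini : Tendsto
      (fun θ => (Filter.limsup (fun s => (c (θ + s) - c θ) / s) (𝓝[≠] (0:ℝ))) / (c θ) ^ ((3:ℝ)/2))
      atTop (𝓝 0))
    (hψ : ∀ θ ≥ (0:ℝ), HasDerivAt ψ (ψ' θ) θ)
    (hψ'' : ∀ θ > (0:ℝ), HasDerivAt ψ' (c θ * ψ θ) θ)
    (hψ0 : ψ 0 = 0) (hψ'0 : ψ' 0 = 1)
    (h : ℝ → ℝ) (δ ε : ℝ) (hδ : 0 < δ) (hε0 : 0 < ε) (hε1 : ε < 1)
    (hh : Tendsto (fun θ => h θ /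
        Real.exp ((1 - ε) * ((d:ℝ) - 1) * (1 - q) * ∫ t in (0:ℝ)..(θ / 2 - δ), Real.sqrt (c t)))
      atTop (𝓝 0)) :
    Tendsto (fun R : ℝ =>
        -(1 / (1 - q)) * (a * ∫ θ in (0:ℝ)..R, ψ θ ^ (d - 1)) ^ (1 - q)
          + h (2 * R) / 2)
      atTop atBot := by
  have hψpos := psi_pos hc_pos hψ hψ'' hψ0 hψ'0
  have hψ'ge := psi'_ge_one hc_pos hψ hψ'' hψ0 hψ'0
  have hψmono := psi_mono hc_pos hψ hψ'' hψ0 hψ'0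
  have hψ'mono := psi'_mono hc_pos hψ hψ'' hψ0 hψ'0
  have hψid := psi_ge_id hc_pos hψ hψ'' hψ0 hψ'0
  have hq' : (0:ℝ) < 1 - q := by linarith
  set K : ℝ := 1 / (1 - q) with hKdef
  have hK : 0 < K := by positivity
  have hd1 : (1:ℝ) ≤ (d:ℝ) - 1 := by
    have : (2:ℝ) ≤ (d:ℝ) := by exact_mod_cast hd
    linarith
  set β : ℝ := (1 - ε) * ((d:ℝ) - 1) * (1 - q) with hβdef
  have hβ : 0 < β := by
    apply mul_pos (mul_pos (by linarith) (by linarith)) hq'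
  set C₀ : ℝ := (∫ t in (0:ℝ)..1, Real.sqrt (c t)) - (Real.log (ψ 1) + Real.log (ψ' 1))/2
    with hC₀def
  set C₁ : ℝ := C₀ + Real.log (2/δ) / 2 with hC₁def
  set c₃ : ℝ := (a*(δ/2)) ^ (1-q) * Real.exp (-(β*C₁)) with hc₃def
  have hc₃ : 0 < c₃ := by positivity
  set S : ℝ → ℝ := fun R => ∫ t in (0:ℝ)..(R - δ), Real.sqrt (c t) with hSdef
  set V : ℝ → ℝ := fun R => ∫ θ in (0:ℝ)..R, ψ θ ^ (d - 1) with hVdef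
  set X : ℝ → ℝ := fun R => (a * (R^d/(d:ℝ))) ^ (1-q) with hXdef
  -- rewrite hh with the substitution θ = 2R
  have hh' : Tendsto (fun R : ℝ => h (2*R) / Real.exp (β * S R)) atTop (𝓝 0) := by
    have htwo : Tendsto (fun R : ℝ => 2*R) atTop atTop :=
      Tendsto.const_mul_atTop (by norm_num) tendsto_id
    have hcomp := hh.comp htwo
    refine hcomp.congr fun R => ?_
    have e : 2*R/2 - δ = R - δ := by ring
    simp only [Function.comp_apply, hSdef, hβdef, e]
  -- the main eventual estimate
  have hmain : ∀ᶠ R in atTop, -(1 / (1 - q)) * (a * V R) ^ (1 - q) + h (2*R) / 2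
      ≤ -(K/2) * X R := by
    have hev1 : ∀ᶠ R in atTop, δ + 2 ≤ R := eventually_ge_atTop _
    have hev2 : ∀ᶠ R in atTop, |h (2*R) / Real.exp (β * S R)| < K * c₃ := by
      have habs : Tendsto (fun R : ℝ => |h (2*R) / Real.exp (β * S R)|) atTop (𝓝 0) := by
        simpa using hh'.abs
      exact habs.eventually (eventually_lt_nhds (by positivity : (0:ℝ) < K * c₃))
    filter_upwards [hev1, hev2] with R hR hhR
    have hRδ : 1 ≤ R - δ := by linarith
    have hR0 : 0 < R := by linarith
    obtain ⟨b, hbdef⟩ : ∃ b : ℝ, b = R - δ/2 := ⟨_, rfl⟩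
    have hRδ2 : R - δ ≤ b := by rw [hbdef]; linarith
    have hb1 : 1 ≤ b := by rw [hbdef]; linarith
    have hψb1 : 1 ≤ ψ b := le_trans hb1 (hψid b (by linarith))
    have hψbpos : 0 < ψ b := by linarith
    -- Step (1): S R ≤ log ψ b + C₁
    have hS1 : S R ≤ Real.log (ψ b) + C₁ := by
      have hkey := key_integral hc_cont hc_pos hψ hψ'' hψ0 hψ'0 hRδ
      -- ψ' (R-δ) ≤ (2/δ) * ψ b via MVT on [R-δ, b]
      have hMVT : ∃ ξ ∈ Ioo (R-δ) b, ψ' ξ = (ψ b - ψ (R-δ)) / (b - (R-δ)) := by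
        apply exists_hasDerivAt_eq_slope ψ ψ' (by rw [hbdef]; linarith)
        · exact fun x hx => (hψ x (by linarith [hx.1])).continuousAt.continuousWithinAt
        · exact fun x hx => hψ x (by linarith [hx.1])
      obtain ⟨ξ, hξ, hξval⟩ := hMVT
      have hψ'le : ψ' (R-δ) ≤ (2/δ) * ψ b := by
        have h1 : ψ' (R-δ) ≤ ψ' ξ := hψ'mono _ _ (by linarith) hξ.1.le
        have h2 : b - (R-δ) = δ/2 := by rw [hbdef]; ring
        have h3 : 0 ≤ ψ (R-δ) := le_trans (by linarith) (hψid _ (by linarith))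
        rw [hξval, h2] at h1
        have he : (ψ b - ψ (R-δ)) / (δ/2) = (2/δ) * (ψ b - ψ (R-δ)) := by
          field_simp
        rw [he] at h1
        have h4 : (2/δ) * (ψ b - ψ (R-δ)) ≤ (2/δ) * ψ b :=
          mul_le_mul_of_nonneg_left (by linarith) (by positivity)
        linarith
      have hlog1 : Real.log (ψ (R-δ)) ≤ Real.log (ψ b) :=
        Real.log_le_log (hψpos _ (by linarith)) (hψmono _ _ (by linarith) hRδ2)
      have hlog2 : Real.log (ψ' (R-δ)) ≤ Real.log (2/δ) + Real.log (ψ b) := by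
        rw [← Real.log_mul (by positivity) hψbpos.ne']
        exact Real.log_le_log (by linarith [hψ'ge (R-δ) (by linarith : (0:ℝ) < R-δ)]) hψ'le
      simp only [hSdef, hC₁def, hC₀def]
      linarith
    -- Step (2): exp(β * S R) ≤ exp(β*C₁) * ψ b ^ β
    have hE : Real.exp (β * S R) ≤ Real.exp (β*C₁) * ψ b ^ β := by
      have h1 : β * S R ≤ β * (Real.log (ψ b) + C₁) :=
        mul_le_mul_of_nonneg_left hS1 hβ.le
      calc Real.exp (β * S R) ≤ Real.exp (β * (Real.log (ψ b) + C₁)) := Real.exp_le_exp.2 h1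
        _ = Real.exp (β*C₁) * Real.exp (Real.log (ψ b) * β) := by
            rw [← Real.exp_add]; ring_nf
        _ = Real.exp (β*C₁) * ψ b ^ β := by rw [← Real.rpow_def_of_pos hψbpos]
    -- integrability of ψ^(d-1)
    have hψcont : ∀ {a' b' : ℝ}, 0 ≤ a' → ContinuousOn (fun θ => ψ θ ^ (d-1)) (Icc a' b') :=
      fun {a' b'} ha' => (ContinuousOn.pow
        (fun t ht => (hψ t (le_trans ha' ht.1)).continuousAt.continuousWithinAt) _)
    -- Step (3): (δ/2) * ψ b ^ (d-1) ≤ V R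
    have hV1 : (δ/2) * ψ b ^ (d-1) ≤ V R := by
      have hi1 : IntervalIntegrable (fun θ => ψ θ ^ (d-1)) volume 0 b :=
        (hψcont le_rfl).intervalIntegrable_of_Icc (by rw [hbdef]; linarith)
      have hi2 : IntervalIntegrable (fun θ => ψ θ ^ (d-1)) volume b R :=
        (hψcont (by rw [hbdef]; linarith : (0:ℝ) ≤ b)).intervalIntegrable_of_Icc (by rw [hbdef]; linarith)
      have hsplit : V R = (∫ θ in (0:ℝ)..b, ψ θ ^ (d-1)) + ∫ θ in b..R, ψ θ ^ (d-1) :=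
        (intervalIntegral.integral_add_adjacent_intervals hi1 hi2).symm
      have hnn : 0 ≤ ∫ θ in (0:ℝ)..b, ψ θ ^ (d-1) := by
        apply intervalIntegral.integral_nonneg (by rw [hbdef]; linarith)
        intro u hu
        exact pow_nonneg (le_trans hu.1 (hψid u hu.1)) _
      have hconst : (δ/2) * ψ b ^ (d-1) ≤ ∫ θ in b..R, ψ θ ^ (d-1) := by
        have := intervalIntegral.integral_mono_on (by rw [hbdef]; linarith : b ≤ R)
          (intervalIntegrable_const) hi2
          (fun u hu => pow_le_pow_left₀ hψbpos.le
            (hψmono b u (by rw [hbdef]; linarith) hu.1) (d-1))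
        rw [intervalIntegral.integral_const] at this
        calc (δ/2) * ψ b ^ (d-1) = (R - b) • ψ b ^ (d-1) := by
              rw [hbdef, smul_eq_mul]; ring
          _ ≤ _ := this
      linarith
    -- Step (4): R^d/d ≤ V R
    have hV2 : R^d/(d:ℝ) ≤ V R := by
      have hi3 : IntervalIntegrable (fun θ : ℝ => θ ^ (d-1)) volume 0 R :=
        ((continuous_pow (d-1)).continuousOn).intervalIntegrable_of_Icc hR0.le
      have hi4 : IntervalIntegrable (fun θ => ψ θ ^ (d-1)) volume 0 R :=
        (hψcont le_rfl).intervalIntegrable_of_Icc hR0.le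
      have hmono := intervalIntegral.integral_mono_on hR0.le hi3 hi4
        (fun u hu => pow_le_pow_left₀ hu.1 (hψid u hu.1) (d-1))
      rw [integral_pow] at hmono
      have hde : d - 1 + 1 = d := by omega
      have h1d : (1:ℕ) ≤ d := by omega
      have hcast2 : ((d-1:ℕ):ℝ) + 1 = (d:ℝ) := by
        push_cast [Nat.cast_sub h1d]; ring
      rw [hde, hcast2] at hmono
      have hz : (0:ℝ)^d = 0 := zero_pow (by omega : d ≠ 0)
      rw [hz, sub_zero] at hmono
      exact hmono
    have haV : 0 < a * V R := by
      apply mul_pos ha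
      calc (0:ℝ) < (δ/2) * ψ b ^ (d-1) := by positivity
        _ ≤ V R := hV1
    -- Step (6): c₃ * exp(β S R) ≤ (a V R)^(1-q)
    have hY1 : c₃ * Real.exp (β * S R) ≤ (a * V R) ^ (1-q) := by
      have h1 : (a * ((δ/2) * ψ b ^ (d-1))) ^ (1-q) ≤ (a * V R) ^ (1-q) :=
        Real.rpow_le_rpow (by positivity) (mul_le_mul_of_nonneg_left hV1 ha.le) hq'.le
      have h2 : (a * ((δ/2) * ψ b ^ (d-1))) ^ (1-q)
          = (a*(δ/2)) ^ (1-q) * (ψ b ^ (d-1) : ℝ) ^ (1-q) := by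
        rw [← mul_assoc, Real.mul_rpow (by positivity) (by positivity)]
      have h3 : (ψ b ^ (d-1) : ℝ) ^ (1-q) = ψ b ^ (((d-1:ℕ):ℝ) * (1-q)) := by
        rw [← Real.rpow_natCast (ψ b) (d-1), ← Real.rpow_mul hψbpos.le]
      have hcast : ((d-1:ℕ):ℝ) = (d:ℝ) - 1 := by
        have : (1:ℕ) ≤ d := by omega
        push_cast [Nat.cast_sub this]
        ring
      have h4 : β ≤ ((d-1:ℕ):ℝ) * (1-q) := by
        rw [hcast, hβdef]
        nlinarith
      have h5 : ψ b ^ β ≤ ψ b ^ (((d-1:ℕ):ℝ) * (1-q)) :=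
        Real.rpow_le_rpow_of_exponent_le hψb1 h4
      have h6 : Real.exp (-(β*C₁)) * Real.exp (β * S R) ≤ ψ b ^ β := by
        rw [← Real.exp_add]
        calc Real.exp (-(β*C₁) + β * S R) ≤ Real.exp (β * Real.log (ψ b)) := by
              apply Real.exp_le_exp.2
              have := mul_le_mul_of_nonneg_left hS1 hβ.le
              linarith
          _ = ψ b ^ β := by rw [Real.rpow_def_of_pos hψbpos, mul_comm]
      calc c₃ * Real.exp (β * S R)
          = (a*(δ/2)) ^ (1-q) * (Real.exp (-(β*C₁)) * Real.exp (β * S R)) := by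
            rw [hc₃def]; ring
        _ ≤ (a*(δ/2)) ^ (1-q) * ψ b ^ β := by
            apply mul_le_mul_of_nonneg_left h6 (by positivity)
        _ ≤ (a*(δ/2)) ^ (1-q) * ψ b ^ (((d-1:ℕ):ℝ) * (1-q)) := by
            apply mul_le_mul_of_nonneg_left h5 (by positivity)
        _ = (a * ((δ/2) * ψ b ^ (d-1))) ^ (1-q) := by rw [h2, h3]
        _ ≤ (a * V R) ^ (1-q) := h1
    -- Step (7): X R ≤ (a V R)^(1-q)
    have hY2 : X R ≤ (a * V R) ^ (1-q) := by
      apply Real.rpow_le_rpow (by positivity) (mul_le_mul_of_nonneg_left hV2 ha.le) hq'.le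
    -- Step (8): h(2R) ≤ K c₃ exp(β S R)
    have hhle : h (2*R) ≤ K * c₃ * Real.exp (β * S R) := by
      have hEpos : 0 < Real.exp (β * S R) := Real.exp_pos _
      have habs : h (2*R) / Real.exp (β * S R) ≤ K * c₃ :=
        le_of_lt (lt_of_le_of_lt (le_abs_self _) hhR)
      calc h (2*R) = (h (2*R) / Real.exp (β * S R)) * Real.exp (β * S R) := by
            field_simp
        _ ≤ (K * c₃) * Real.exp (β * S R) :=
            mul_le_mul_of_nonneg_right habs hEpos.le
    -- combine
    have hbig : (X R + c₃ * Real.exp (β * S R)) / 2 ≤ (a * V R) ^ (1-q) := by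
      linarith
    have hmul := mul_le_mul_of_nonneg_left hbig hK.le
    have hexp1 : K * ((X R + c₃ * Real.exp (β * S R)) / 2)
        = (K * X R)/2 + (K * (c₃ * Real.exp (β * S R)))/2 := by ring
    rw [hexp1] at hmul
    have hhle' : h (2*R) ≤ K * (c₃ * Real.exp (β * S R)) := by
      rw [← mul_assoc]; exact hhle
    have hKq : (1:ℝ) / (1 - q) = K := hKdef.symm
    rw [hKq]
    linarith
  -- limit of the majorant
  have hXtend : Tendsto X atTop atTop := by
    have h1 : Tendsto (fun R : ℝ => a * (R^d/(d:ℝ))) atTop atTop := by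
      apply Tendsto.const_mul_atTop ha
      apply Tendsto.atTop_div_const (by positivity : (0:ℝ) < (d:ℝ))
      exact tendsto_pow_atTop (by omega)
    exact (tendsto_rpow_atTop hq').comp h1
  have hmaj : Tendsto (fun R => -(K/2) * X R) atTop atBot :=
    (tendsto_const_mul_atBot_of_neg (by linarith : -(K/2) < 0)).2 hXtend
  exact tendsto_atBot_mono' atTop hmain hmaj
end

section
/- Let c : [0,∞) → ℝ be continuous, positive and non-decreasing, and let ψ : [0,∞) → ℝ be twice differentiable with ψ''(θ) = c(θ)·ψ(θ) for θ > 0, ψ(0) = 0, ψ'(0) = 1. Let λ̃ > λ > 0 and let h : [0,∞) → ℝ be a function with liminf_{θ→∞} h(θ)/exp(λ̃·∫₀^θ √(c(t)) dt) > 0. Then liminf_{θ→∞} h(θ)/ψ(θ)^λ > 0. -/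
/-!
As long as `ψ ≥ 0`, `ψ'' = c ψ ≥ 0`, so `ψ` is convex with tangent slope `1` at `0`; this keeps
`ψ` positive and gives `ψ' ≥ 1` on `(0, ∞)`. For fixed `θ`, the energy `ψ'(t)² - c(θ) ψ(t)²` is
nonincreasing on `[1, θ]` because `c` is nondecreasing, whence `ψ' ≤ ψ'(1) + √c ψ`, and a Grönwall
argument gives `ψ(θ) ≤ K θ exp (∫₀^θ √c)`. Finally `∫₀^θ √c ≥ √(c 0) θ`, so the factor `θ ^ λ` is
absorbed by `exp ((λ̃ - λ) ∫₀^θ √c)`.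
-/

open Real Filter Set Topology

theorem pos_of_forall_pos_Ioo_imp_pos {f : ℝ → ℝ} (hf : ContinuousOn f (Ioi 0))
    (h0 : ∀ᶠ x in 𝓝[>] 0, 0 < f x) (hstep : ∀ τ > 0, (∀ x ∈ Ioo 0 τ, 0 < f x) → 0 < f τ) :
    ∀ x > 0, 0 < f x := by
  intro x hx
  by_contra! hfx
  obtain ⟨δ, hδ, hδf⟩ := mem_nhdsGT_iff_exists_Ioo_subset.mp h0
  have hδ : 0 < δ := hδ
  have hδx : δ ≤ x := not_lt.1 fun hxδ => (hδf ⟨hx, hxδ⟩ : 0 < f x).not_ge hfx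
  have hZ : IsCompact (Icc δ x ∩ f ⁻¹' Iic 0) :=
    isCompact_Icc.of_isClosed_subset
      ((hf.mono fun t ht => hδ.trans_le ht.1).preimage_isClosed_of_isClosed isClosed_Icc
        isClosed_Iic) inter_subset_left
  obtain ⟨τ, ⟨hτ, hfτ⟩, hτmin⟩ := hZ.exists_isLeast ⟨x, ⟨hδx, le_rfl⟩, hfx⟩
  refine (hstep τ (hδ.trans_le hτ.1) fun t ht => ?_).not_ge hfτ
  by_contra! hft
  rcases lt_or_ge t δ with htδ | hδt
  · exact (hδf ⟨ht.1, htδ⟩ : 0 < f t).not_ge hft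
  · exact ht.2.not_ge (hτmin ⟨⟨hδt, ht.2.le.trans hτ.2⟩, hft⟩)

theorem hasDerivAt_integral_of_continuousOn_Ici {g : ℝ → ℝ} (hg : ContinuousOn g (Ici 0))
    {θ : ℝ} (hθ : 0 < θ) : HasDerivAt (fun x => ∫ t in (0 : ℝ)..x, g t) (g θ) θ :=
  intervalIntegral.integral_hasDerivAt_right
    (hg.mono (by rw [uIcc_of_le hθ.le]; exact Icc_subset_Ici_self)).intervalIntegrable
    (hg.mono Ioi_subset_Ici_self |>.stronglyMeasurableAtFilter isOpen_Ioi θ hθ)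
    (hg.continuousAt (Ici_mem_nhds hθ))

theorem mul_le_integral_of_monotoneOn {g : ℝ → ℝ} (hg : MonotoneOn g (Ici 0)) {θ : ℝ}
    (hθ : 0 ≤ θ) : θ * g 0 ≤ ∫ t in (0 : ℝ)..θ, g t := by
  have hint : IntervalIntegrable g MeasureTheory.volume 0 θ :=
    (hg.mono (by rw [uIcc_of_le hθ]; exact Icc_subset_Ici_self)).intervalIntegrable
  have := intervalIntegral.integral_mono_on hθ intervalIntegrable_const hint
    fun t ht => hg self_mem_Ici ht.1 ht.1
  simpa [mul_comm] using this

theorem mul_exp_neg_le_of_deriv_le {f f' b B : ℝ → ℝ} {a K θ : ℝ} (hK : 0 ≤ K)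
    (hf : ∀ x ≥ a, HasDerivAt f (f' x) x) (hB : ∀ x ≥ a, HasDerivAt B (b x) x)
    (hB0 : ∀ x ≥ a, 0 ≤ B x) (hf' : ∀ x > a, f' x ≤ K + b x * f x) (hθ : a ≤ θ) :
    f θ * exp (-B θ) ≤ f a * exp (-B a) + K * (θ - a) := by
  have hderiv : ∀ x ≥ a, HasDerivAt (fun x => K * x - f x * exp (-B x))
      (K - (f' x * exp (-B x) + f x * (exp (-B x) * -b x))) x := fun x hx =>
    (((hasDerivAt_id' x).const_mul K).congr_deriv (mul_one K)).sub ((hf x hx).mul (hB x hx).neg.exp)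
  have hmono : MonotoneOn (fun x => K * x - f x * exp (-B x)) (Ici a) := by
    refine monotoneOn_of_hasDerivWithinAt_nonneg (convex_Ici a)
      (fun x hx => (hderiv x hx).continuousAt.continuousWithinAt)
      (fun x hx => (hderiv x (interior_subset hx)).hasDerivWithinAt) fun x hx => ?_
    rw [interior_Ici] at hx
    have he : exp (-B x) ≤ 1 := exp_le_one_iff.2 (neg_nonpos.2 (hB0 x (le_of_lt hx)))
    nlinarith [mul_le_mul_of_nonneg_right (hf' x hx) (exp_pos (-B x)).le,
      mul_nonneg hK (sub_nonneg.2 he)]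
  have := hmono self_mem_Ici hθ hθ
  simp only at this
  linarith

theorem eventually_mul_rpow_le_exp {K s ε : ℝ} (hK : 0 ≤ K) (hε : 0 < ε) :
    ∀ᶠ θ in atTop, (K * θ) ^ s ≤ exp (ε * θ) := by
  filter_upwards [(tendsto_exp_mul_div_rpow_atTop s ε hε).eventually_ge_atTop (K ^ s),
    eventually_gt_atTop 0] with θ hθ hθ0
  rwa [mul_rpow hK hθ0.le, ← le_div_iff₀ (rpow_pos_of_pos hθ0 s)]

section LinearODE

variable {c ψ ψ' : ℝ → ℝ}

theorem convexOn_of_deriv2_eq_mul {D : Set ℝ} (hD : Convex ℝ D) (hD0 : D ⊆ Ici 0)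
    (hc : ∀ θ > 0, 0 ≤ c θ) (hψ : ∀ θ ≥ 0, HasDerivAt ψ (ψ' θ) θ)
    (hψ'' : ∀ θ > 0, HasDerivAt ψ' (c θ * ψ θ) θ) (hψD : ∀ θ ∈ interior D, 0 ≤ ψ θ) :
    ConvexOn ℝ D ψ := by
  have hint : ∀ θ ∈ interior D, 0 < θ := fun θ hθ => by
    simpa using interior_mono hD0 hθ
  exact convexOn_of_hasDerivWithinAt2_nonneg hD
    (fun θ hθ => (hψ θ (hD0 hθ)).continuousAt.continuousWithinAt)
    (fun θ hθ => (hψ θ (hint θ hθ).le).hasDerivWithinAt)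
    (fun θ hθ => (hψ'' θ (hint θ hθ)).hasDerivWithinAt)
    fun θ hθ => mul_nonneg (hc θ (hint θ hθ)) (hψD θ hθ)

theorem pos_of_deriv2_eq_mul (hc : ∀ θ > 0, 0 ≤ c θ) (hψ : ∀ θ ≥ 0, HasDerivAt ψ (ψ' θ) θ)
    (hψ'' : ∀ θ > 0, HasDerivAt ψ' (c θ * ψ θ) θ) (hψ0 : ψ 0 = 0) (hψ'0 : ψ' 0 = 1) :
    ∀ θ > 0, 0 < ψ θ := by
  have hd0 : HasDerivAt ψ 1 0 := hψ'0 ▸ hψ 0 le_rfl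
  refine pos_of_forall_pos_Ioo_imp_pos
    (fun θ hθ => (hψ θ (le_of_lt hθ)).continuousAt.continuousWithinAt) ?_ fun τ hτ hpos => ?_
  · filter_upwards [hd0.tendsto_slope_zero_right.eventually (eventually_gt_nhds one_pos),
      self_mem_nhdsWithin] with t ht ht0
    simp only [zero_add, hψ0, sub_zero, smul_eq_mul] at ht
    exact (mul_pos_iff_of_pos_left (inv_pos.2 ht0)).1 ht
  · have hconv : ConvexOn ℝ (Icc 0 τ) ψ :=
      convexOn_of_deriv2_eq_mul (convex_Icc 0 τ) (fun t ht => ht.1) hc hψ hψ''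
        (by rw [interior_Icc]; exact fun t ht => (hpos t ht).le)
    have hslope := hconv.le_slope_of_hasDerivAt (left_mem_Icc.2 hτ.le)
      (right_mem_Icc.2 hτ.le) hτ hd0
    rw [slope_def_field, hψ0, sub_zero, sub_zero, le_div_iff₀ hτ, one_mul] at hslope
    linarith

theorem one_le_deriv_of_deriv2_eq_mul (hc : ∀ θ > 0, 0 ≤ c θ)
    (hψ : ∀ θ ≥ 0, HasDerivAt ψ (ψ' θ) θ) (hψ'' : ∀ θ > 0, HasDerivAt ψ' (c θ * ψ θ) θ)
    (hψ0 : ψ 0 = 0) (hψ'0 : ψ' 0 = 1) {θ : ℝ} (hθ : 0 < θ) : 1 ≤ ψ' θ := by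
  have hconv : ConvexOn ℝ (Ici 0) ψ :=
    convexOn_of_deriv2_eq_mul (convex_Ici 0) subset_rfl hc hψ hψ'' (by
      rw [interior_Ici]; exact fun t ht => (pos_of_deriv2_eq_mul hc hψ hψ'' hψ0 hψ'0 t ht).le)
  calc 1 = ψ' 0 := hψ'0.symm
    _ ≤ slope ψ 0 θ := hconv.le_slope_of_hasDerivAt self_mem_Ici hθ.le hθ (hψ 0 le_rfl)
    _ ≤ ψ' θ := hconv.slope_le_of_hasDerivAt self_mem_Ici hθ.le hθ (hψ θ hθ.le)

theorem deriv_le_add_sqrt_mul (hc : ∀ θ > 0, 0 ≤ c θ) (hc_mono : MonotoneOn c (Ici 0))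
    (hψ : ∀ θ ≥ 0, HasDerivAt ψ (ψ' θ) θ) (hψ'' : ∀ θ > 0, HasDerivAt ψ' (c θ * ψ θ) θ)
    (hψ_nonneg : ∀ θ > 0, 0 ≤ ψ θ) (hψ'_nonneg : ∀ θ > 0, 0 ≤ ψ' θ) {a θ : ℝ} (ha : 0 < a)
    (haθ : a ≤ θ) : ψ' θ ≤ ψ' a + √(c θ) * ψ θ := by
  have hθ : 0 < θ := ha.trans_le haθ
  have hderiv : ∀ t ≥ a, HasDerivAt (fun t => ψ' t ^ 2 - c θ * ψ t ^ 2)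
      (2 * ψ t * ψ' t * (c t - c θ)) t := fun t ht => by
    have ht0 : 0 < t := ha.trans_le ht
    refine (((hψ'' t ht0).fun_pow 2).fun_sub
      (((hψ t ht0.le).fun_pow 2).const_mul (c θ))).congr_deriv ?_
    norm_num
    ring
  have hanti : AntitoneOn (fun t => ψ' t ^ 2 - c θ * ψ t ^ 2) (Icc a θ) := by
    refine antitoneOn_of_hasDerivWithinAt_nonpos (convex_Icc a θ)
      (fun t ht => (hderiv t ht.1).continuousAt.continuousWithinAt)
      (fun t ht => (hderiv t (interior_subset ht).1).hasDerivWithinAt) fun t ht => ?_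
    rw [interior_Icc] at ht
    have ht0 : 0 < t := ha.trans ht.1
    exact mul_nonpos_of_nonneg_of_nonpos
      (mul_nonneg (mul_nonneg zero_le_two (hψ_nonneg t ht0)) (hψ'_nonneg t ht0))
      (sub_nonpos.2 (hc_mono ht0.le hθ.le ht.2.le))
  have henergy := hanti (left_mem_Icc.2 haθ) (right_mem_Icc.2 haθ) haθ
  simp only at henergy
  have hsq : √(c θ) ^ 2 = c θ := sq_sqrt (hc θ hθ)
  have hrhs : 0 ≤ ψ' a + √(c θ) * ψ θ :=
    add_nonneg (hψ'_nonneg a ha) (mul_nonneg (sqrt_nonneg _) (hψ_nonneg θ hθ))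
  refine (pow_le_pow_iff_left₀ (hψ'_nonneg θ hθ) hrhs two_ne_zero).1 ?_
  nlinarith [mul_nonneg (hψ'_nonneg a ha) (mul_nonneg (sqrt_nonneg (c θ)) (hψ_nonneg θ hθ)),
    mul_nonneg (hc θ hθ) (sq_nonneg (ψ a))]

theorem le_mul_exp_integral_sqrt_of_deriv2_eq_mul (hc_cont : ContinuousOn c (Ici 0))
    (hc : ∀ θ > 0, 0 ≤ c θ) (hc_mono : MonotoneOn c (Ici 0))
    (hψ : ∀ θ ≥ 0, HasDerivAt ψ (ψ' θ) θ) (hψ'' : ∀ θ > 0, HasDerivAt ψ' (c θ * ψ θ) θ)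
    (hψ0 : ψ 0 = 0) (hψ'0 : ψ' 0 = 1) {θ : ℝ} (hθ : 1 ≤ θ) :
    ψ θ ≤ (ψ 1 + ψ' 1) * θ * exp (∫ t in (0 : ℝ)..θ, √(c t)) := by
  have hψ_pos := pos_of_deriv2_eq_mul hc hψ hψ'' hψ0 hψ'0
  have hψ'_pos : ∀ θ > 0, 1 ≤ ψ' θ := fun θ hθ =>
    one_le_deriv_of_deriv2_eq_mul hc hψ hψ'' hψ0 hψ'0 hθ
  set I : ℝ → ℝ := fun θ => ∫ t in (0 : ℝ)..θ, √(c t)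
  have hI0 : ∀ θ ≥ 0, 0 ≤ I θ := fun θ hθ =>
    intervalIntegral.integral_nonneg hθ fun t _ => sqrt_nonneg _
  have hgronwall := mul_exp_neg_le_of_deriv_le (B := I) (b := fun t => √(c t))
    (zero_le_one.trans (hψ'_pos 1 one_pos)) (fun x hx => hψ x (zero_le_one.trans hx))
    (fun x hx => hasDerivAt_integral_of_continuousOn_Ici
      (continuous_sqrt.comp_continuousOn hc_cont) (one_pos.trans_le hx))
    (fun x hx => hI0 x (zero_le_one.trans hx))
    (fun x hx => deriv_le_add_sqrt_mul hc hc_mono hψ hψ''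
      (fun t ht => (hψ_pos t ht).le) (fun t ht => zero_le_one.trans (hψ'_pos t ht)) one_pos hx.le)
    hθ
  have he1 : exp (-I 1) ≤ 1 := exp_le_one_iff.2 (neg_nonpos.2 (hI0 1 zero_le_one))
  calc ψ θ = ψ θ * exp (-I θ) * exp (I θ) := by
        rw [mul_assoc, ← exp_add, neg_add_cancel, exp_zero, mul_one]
    _ ≤ (ψ 1 + ψ' 1) * θ * exp (I θ) := by
        refine mul_le_mul_of_nonneg_right ?_ (exp_pos _).le
        nlinarith [mul_le_mul_of_nonneg_left he1 (hψ_pos 1 one_pos).le, hψ_pos 1 one_pos,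
          hψ'_pos 1 one_pos]

theorem eventually_rpow_le_exp_mul_integral_sqrt (hc_cont : ContinuousOn c (Ici 0))
    (hc_pos : ∀ θ ≥ 0, 0 < c θ) (hc_mono : MonotoneOn c (Ici 0))
    (hψ : ∀ θ ≥ 0, HasDerivAt ψ (ψ' θ) θ) (hψ'' : ∀ θ > 0, HasDerivAt ψ' (c θ * ψ θ) θ)
    (hψ0 : ψ 0 = 0) (hψ'0 : ψ' 0 = 1) {lam lamT : ℝ} (hlam : 0 ≤ lam) (hlamT : lam < lamT) :
    ∀ᶠ θ in atTop, ψ θ ^ lam ≤ exp (lamT * ∫ t in (0 : ℝ)..θ, √(c t)) := by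
  have hc : ∀ θ > 0, 0 ≤ c θ := fun θ hθ => (hc_pos θ hθ.le).le
  have hψ_pos := pos_of_deriv2_eq_mul hc hψ hψ'' hψ0 hψ'0
  have hK : 0 ≤ ψ 1 + ψ' 1 := add_nonneg (hψ_pos 1 one_pos).le
    (zero_le_one.trans (one_le_deriv_of_deriv2_eq_mul hc hψ hψ'' hψ0 hψ'0 one_pos))
  filter_upwards [eventually_mul_rpow_le_exp (s := lam) hK
      (mul_pos (sub_pos.2 hlamT) (sqrt_pos.2 (hc_pos 0 le_rfl))),
    eventually_ge_atTop 1] with θ hpoly hθ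
  set I := ∫ t in (0 : ℝ)..θ, √(c t)
  have hθ0 : 0 ≤ θ := zero_le_one.trans hθ
  have hI : θ * √(c 0) ≤ I :=
    mul_le_integral_of_monotoneOn (fun x hx y hy hxy => sqrt_le_sqrt (hc_mono hx hy hxy)) hθ0
  calc ψ θ ^ lam ≤ ((ψ 1 + ψ' 1) * θ * exp I) ^ lam :=
        rpow_le_rpow (hψ_pos θ (one_pos.trans_le hθ)).le
          (le_mul_exp_integral_sqrt_of_deriv2_eq_mul hc_cont hc hc_mono hψ hψ'' hψ0 hψ'0 hθ)
          hlam
    _ = ((ψ 1 + ψ' 1) * θ) ^ lam * exp (lam * I) := by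
        rw [mul_rpow (mul_nonneg hK hθ0) (exp_pos _).le, ← exp_mul, mul_comm I]
    _ ≤ exp ((lamT - lam) * I) * exp (lam * I) := by
        gcongr
        exact hpoly.trans (exp_le_exp.2 (by nlinarith))
    _ = exp (lamT * I) := by rw [← exp_add]; ring_nf

end LinearODE

/-- Implication (6.9) ⇒ (6.12) in Section 6.2: with `ψ'' = c ψ`, `ψ(0)=0`, `ψ'(0)=1`, if
`liminf_{θ→∞} h(θ)/exp(λ̃ ∫₀^θ √c) > 0` (i.e. eventually bounded below by a positive
constant) for some `λ̃ > λ > 0`, then `liminf_{θ→∞} h(θ)/ψ(θ)^λ > 0`. -/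
theorem stmt15 (c ψ ψ' : ℝ → ℝ)
    (hc_cont : ContinuousOn c (Set.Ici 0))
    (hc_pos : ∀ θ ≥ (0:ℝ), 0 < c θ)
    (hc_mono : MonotoneOn c (Set.Ici 0))
    (hψ : ∀ θ ≥ (0:ℝ), HasDerivAt ψ (ψ' θ) θ)
    (hψ'' : ∀ θ > (0:ℝ), HasDerivAt ψ' (c θ * ψ θ) θ)
    (hψ0 : ψ 0 = 0) (hψ'0 : ψ' 0 = 1)
    (lam lamT : ℝ) (hlam : 0 < lam) (hlamT : lam < lamT)
    (h : ℝ → ℝ)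
    (hinf : ∃ m : ℝ, 0 < m ∧ ∀ᶠ θ in atTop,
      m ≤ h θ / Real.exp (lamT * ∫ t in (0:ℝ)..θ, Real.sqrt (c t))) :
    ∃ m : ℝ, 0 < m ∧ ∀ᶠ θ in atTop, m ≤ h θ / ψ θ ^ lam := by
  obtain ⟨m, hm, hev⟩ := hinf
  refine ⟨m, hm, ?_⟩
  filter_upwards [hev, eventually_rpow_le_exp_mul_integral_sqrt hc_cont hc_pos hc_mono hψ hψ''
    hψ0 hψ'0 hlam.le hlamT, eventually_gt_atTop 0] with θ hmθ hψθ hθ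
  have hh : 0 ≤ h θ := ((div_pos_iff_of_pos_right (exp_pos _)).1 (hm.trans_le hmθ)).le
  have hψ_pos : 0 < ψ θ ^ lam := rpow_pos_of_pos
    (pos_of_deriv2_eq_mul (fun θ hθ => (hc_pos θ hθ.le).le) hψ hψ'' hψ0 hψ'0 θ hθ) lam
  exact hmθ.trans (div_le_div_of_nonneg_left hh hψ_pos hψθ)
end
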